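/- arXiv:0906.3128 — 4 statements merged into one kernel-verified Lean document; each statement's English description precedes it below -/
import Mathlib

section
/- For the nearest-neighbor simple random walk on Z^d, there exist constants C1, C2 > 0 such that for all n ≥ 1 and all x, y in Z^d, the n-step transition probability satisfies p_n(x,y) ≤ (C2 / n^{d/2}) · exp(−C1·|x−y|²/n), where |·| denotes the ℓ¹ norm. -/
set_option maxHeartbeats 1000000

open Real MeasureTheory

/-- Sites of the lattice `ℤ^d`. -/
abbrev Site (d : ℕ) := Fin d → ℤ

/-- ℓ¹ (taxicab) distance on `ℤ^d`. -/
def dist1 {d : ℕ} (x y : Site d) : ℕ := ∑ i, (x i - y i).natAbs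

/-- The unit step in direction `i`, with sign given by `b`. -/
def step {d : ℕ} (i : Fin d) (b : Bool) : Site d :=
  fun j => if j = i then (if b then 1 else -1) else 0

/-- `p d n x y` is the `n`-step transition probability of the simple random
walk on `ℤ^d` stepping to each of the `2d` nearest neighbors with
probability `1/(2d)`. -/
noncomputable def srwP (d : ℕ) : ℕ → Site d → Site d → ℝ
  | 0, x, y => if x = y then 1 else 0
  | n + 1, x, y => (1 / (2 * d)) * ∑ s : Fin d × Bool, srwP d n (x + step s.1 s.2) y

namespace SRW

variable {d : ℕ}

/-- general weighted nearest-neighbor walk -/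
noncomputable def wP (d : ℕ) (w : Fin d × Bool → ℝ) : ℕ → Site d → Site d → ℝ
  | 0, x, y => if x = y then 1 else 0
  | n + 1, x, y => ∑ s : Fin d × Bool, w s * wP d w n (x + step s.1 s.2) y

lemma srwP_eq_wP (n : ℕ) (x y : Site d) :
    srwP d n x y = wP d (fun _ => 1 / (2 * d)) n x y := by
  induction n generalizing x with
  | zero => rfl
  | succ n ih => simp only [srwP, wP, ih, Finset.mul_sum]

lemma wP_nonneg {w : Fin d × Bool → ℝ} (hw : ∀ s, 0 ≤ w s) (n : ℕ) (x y : Site d) :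
    0 ≤ wP d w n x y := by
  induction n generalizing x with
  | zero => dsimp [wP]; positivity
  | succ n ih => exact Finset.sum_nonneg fun s _ => mul_nonneg (hw s) (ih _)

lemma wP_le_one {w : Fin d × Bool → ℝ} (hw : ∀ s, 0 ≤ w s) (h1 : ∑ s, w s = 1)
    (n : ℕ) (x y : Site d) : wP d w n x y ≤ 1 := by
  induction n generalizing x with
  | zero => dsimp [wP]; split <;> norm_num
  | succ n ih =>
    calc wP d w (n+1) x y ≤ ∑ s : Fin d × Bool, w s * 1 :=
          Finset.sum_le_sum fun s _ => mul_le_mul_of_nonneg_left (ih _) (hw s)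
      _ = 1 := by simpa using h1

noncomputable def dot (l : Fin d → ℝ) (v : Site d) : ℝ := ∑ i, l i * (v i : ℝ)

lemma dot_add (l : Fin d → ℝ) (v u : Site d) : dot l (v + u) = dot l v + dot l u := by
  simp [dot, mul_add, Finset.sum_add_distrib]

noncomputable def Zt (l : Fin d → ℝ) : ℝ := ∑ s : Fin d × Bool, Real.exp (dot l (step s.1 s.2))

lemma Zt_pos (hd : 0 < d) (l : Fin d → ℝ) : 0 < Zt l := by
  have : Nonempty (Fin d) := ⟨⟨0, hd⟩⟩
  exact Finset.sum_pos (fun s _ => Real.exp_pos _) Finset.univ_nonempty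

/-- tilting identity -/
lemma tilt (hd : 0 < d) (l : Fin d → ℝ) (n : ℕ) (x y : Site d) :
    srwP d n x y * Real.exp (dot l (y - x)) =
      (Zt l / (2 * d)) ^ n * wP d (fun s => Real.exp (dot l (step s.1 s.2)) / Zt l) n x y := by
  induction n generalizing x with
  | zero =>
    dsimp [srwP, wP]
    split
    · subst ‹x = y›; simp [dot]
    · simp
  | succ n ih =>
    have hZ := (Zt_pos hd l).ne'
    dsimp only [srwP, wP]
    rw [Finset.mul_sum, Finset.mul_sum, Finset.sum_mul]
    refine Finset.sum_congr rfl fun s _ => ?_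
    have hsplit : (y - x : Site d) = (y - (x + step s.1 s.2)) + step s.1 s.2 := by
      abel
    rw [hsplit, dot_add, Real.exp_add, pow_succ]
    have := ih (x + step s.1 s.2)
    calc 1 / (2 * (d:ℝ)) * srwP d n (x + step s.1 s.2) y *
          (Real.exp (dot l (y - (x + step s.1 s.2))) * Real.exp (dot l (step s.1 s.2)))
        = 1 / (2 * (d:ℝ)) * Real.exp (dot l (step s.1 s.2)) *
            (srwP d n (x + step s.1 s.2) y * Real.exp (dot l (y - (x + step s.1 s.2)))) := by ring
      _ = 1 / (2 * (d:ℝ)) * Real.exp (dot l (step s.1 s.2)) *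
            ((Zt l / (2 * d)) ^ n *
              wP d (fun s => Real.exp (dot l (step s.1 s.2)) / Zt l) n (x + step s.1 s.2) y) := by
          rw [this]
      _ = _ := by field_simp

lemma dist1_triangle (x z y : Site d) : dist1 x y ≤ dist1 x z + dist1 z y := by
  rw [dist1, dist1, dist1, ← Finset.sum_add_distrib]
  refine Finset.sum_le_sum fun i _ => ?_
  have : x i - y i = (x i - z i) + (z i - y i) := by ring
  rw [this]
  exact Int.natAbs_add_le _ _

lemma dist1_step (x : Site d) (i : Fin d) (b : Bool) : dist1 x (x + step i b) = 1 := by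
  have : ∀ j, (x j - (x + step i b) j).natAbs = if j = i then 1 else 0 := by
    intro j
    simp only [Pi.add_apply, step]
    by_cases h : j = i <;> cases b <;> simp [h]
  rw [dist1]
  simp only [this]
  simp

lemma srwP_eq_zero {n : ℕ} {x y : Site d} (h : n < dist1 x y) : srwP d n x y = 0 := by
  induction n generalizing x with
  | zero =>
    have hxy : x ≠ y := by
      rintro rfl
      simp [dist1] at h
    simp [srwP, hxy]
  | succ n ih =>
    dsimp [srwP]
    rw [Finset.sum_eq_zero, mul_zero]
    intro s _
    refine ih ?_
    have h1 := dist1_triangle x (x + step s.1 s.2) y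
    have h2 := dist1_step x s.1 s.2
    omega

noncomputable def phase {d : ℕ} (θ : Fin d → ℝ) (v : Site d) : ℂ :=
  Complex.exp ((∑ i, θ i * (v i : ℝ) : ℝ) * Complex.I)

noncomputable def chf (d : ℕ) (w : Fin d × Bool → ℝ) (θ : Fin d → ℝ) : ℂ :=
  ∑ s : Fin d × Bool, (w s : ℂ) * phase θ (step s.1 s.2)

def box (d : ℕ) : Set (Fin d → ℝ) := Set.univ.pi fun _ => Set.Icc (-π) π

lemma measurableSet_box : MeasurableSet (box d) :=
  MeasurableSet.univ_pi fun _ => measurableSet_Icc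

lemma isCompact_box : IsCompact (box d) := isCompact_univ_pi fun _ => isCompact_Icc

lemma integrableOn_box {E : Type*} [NormedAddCommGroup E] {f : (Fin d → ℝ) → E}
    (hf : Continuous f) : IntegrableOn f (box d) :=
  hf.continuousOn.integrableOn_compact isCompact_box

lemma continuous_phase (v : Site d) : Continuous fun θ : Fin d → ℝ => phase θ v :=
  Complex.continuous_exp.comp
    ((Complex.continuous_ofReal.comp
      (continuous_finset_sum _ fun i _ => (continuous_apply i).mul continuous_const)).mul
      continuous_const)

lemma continuous_chf (w : Fin d × Bool → ℝ) : Continuous (chf d w) :=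
  continuous_finset_sum _ fun s _ => continuous_const.mul (continuous_phase _)

lemma phase_add (θ : Fin d → ℝ) (v u : Site d) :
    phase θ (v + u) = phase θ v * phase θ u := by
  rw [phase, phase, phase, ← Complex.exp_add]
  congr 1
  push_cast
  rw [← add_mul]
  congr 1
  rw [← Finset.sum_add_distrib]
  refine Finset.sum_congr rfl fun i _ => ?_
  rw [Pi.add_apply]
  push_cast
  ring

lemma phase_eq_prod (θ : Fin d → ℝ) (v : Site d) :
    phase θ v = ∏ i, Complex.exp ((θ i * (v i : ℝ) : ℝ) * Complex.I) := by
  rw [phase, ← Complex.exp_sum]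
  congr 1
  push_cast
  rw [Finset.sum_mul]

lemma integral_box_prod {𝕜 : Type*} [RCLike 𝕜] (g : Fin d → ℝ → 𝕜)
    (hg : ∀ i, IntegrableOn (g i) (Set.Icc (-π) π)) :
    ∫ θ in box d, ∏ i, g i (θ i) = ∏ i, ∫ t in Set.Icc (-π) π, g i t := by
  rw [← MeasureTheory.integral_indicator measurableSet_box]
  have h : (box d).indicator (fun θ => ∏ i, g i (θ i))
      = fun θ => ∏ i, (Set.Icc (-π) π).indicator (g i) (θ i) := by
    ext θ
    by_cases h : θ ∈ box d
    · rw [Set.indicator_of_mem h]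
      exact Finset.prod_congr rfl fun i _ => (Set.indicator_of_mem (h i trivial) _).symm
    · rw [Set.indicator_of_notMem h]
      simp only [box, Set.mem_univ_pi] at h
      push_neg at h
      obtain ⟨i, hi⟩ := h
      exact (Finset.prod_eq_zero (Finset.mem_univ i) (Set.indicator_of_notMem hi _)).symm
  rw [h, MeasureTheory.volume_pi]
  beta_reduce
  rw [MeasureTheory.integral_fintype_prod_eq_prod (ι := Fin d)
    (E := fun _ => ℝ) (μ := fun _ => volume)
    (f := fun i => (Set.Icc (-π) π).indicator (g i))]
  exact Finset.prod_congr rfl fun i _ => MeasureTheory.integral_indicator measurableSet_Icc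

lemma key_int (k : ℤ) :
    ∫ t in Set.Icc (-π) π, Complex.exp ((t * (k : ℝ) : ℝ) * Complex.I)
      = if k = 0 then ((2 * π : ℝ) : ℂ) else 0 := by
  rw [MeasureTheory.integral_Icc_eq_integral_Ioc,
    ← intervalIntegral.integral_of_le (by linarith [pi_pos] : -π ≤ π)]
  split
  · rename_i h
    subst h
    simp
    ring
  · rename_i h
    have hc : ((k : ℂ) * Complex.I) ≠ 0 :=
      mul_ne_zero (Int.cast_ne_zero.2 h) Complex.I_ne_zero
    have he : ∀ t : ℝ, Complex.exp ((t * (k : ℝ) : ℝ) * Complex.I)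
        = Complex.exp (((k : ℂ) * Complex.I) * t) := by
      intro t; congr 1; push_cast; ring
    simp_rw [he]
    rw [integral_exp_mul_complex hc]
    have h1 : (k : ℂ) * Complex.I * (π : ℝ) = (k : ℂ) * ((π : ℝ) * Complex.I) := by ring
    have h2 : (k : ℂ) * Complex.I * ((-π : ℝ) : ℂ) = (k : ℂ) * (-((π : ℝ) * Complex.I)) := by
      push_cast; ring
    rw [h1, h2, Complex.exp_int_mul, Complex.exp_int_mul, Complex.exp_pi_mul_I,
      Complex.exp_neg, Complex.exp_pi_mul_I]
    norm_num

lemma wP_fourier (w : Fin d × Bool → ℝ) (n : ℕ) (x y : Site d) :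
    ∫ θ in box d, (chf d w θ) ^ n * phase θ (x - y)
      = (((2 * π) ^ d : ℝ) : ℂ) * wP d w n x y := by
  induction n generalizing x with
  | zero =>
    simp only [pow_zero, one_mul]
    have hint : ∀ i : Fin d, IntegrableOn
        (fun t : ℝ => Complex.exp ((t * (((x - y) i : ℤ) : ℝ) : ℝ) * Complex.I))
        (Set.Icc (-π) π) := by
      intro i
      apply Continuous.integrableOn_Icc
      exact Complex.continuous_exp.comp
        ((Complex.continuous_ofReal.comp (continuous_id.mul continuous_const)).mul
          continuous_const)
    calc ∫ θ in box d, phase θ (x - y)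
        = ∫ θ in box d, ∏ i, Complex.exp ((θ i * (((x - y) i : ℤ) : ℝ) : ℝ) * Complex.I) := by
          refine MeasureTheory.setIntegral_congr_fun measurableSet_box fun θ _ => ?_
          exact phase_eq_prod θ (x - y)
      _ = ∏ i, ∫ t in Set.Icc (-π) π,
            Complex.exp ((t * (((x - y) i : ℤ) : ℝ) : ℝ) * Complex.I) :=
          integral_box_prod _ hint
      _ = ∏ i, if (x - y) i = 0 then ((2 * π : ℝ) : ℂ) else 0 := by
          exact Finset.prod_congr rfl fun i _ => key_int ((x - y) i)
      _ = (((2 * π) ^ d : ℝ) : ℂ) * wP d w 0 x y := by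
          by_cases hxy : x = y
          · subst hxy
            have h0 : ∀ i : Fin d, (if (x - x) i = 0 then ((2 * π : ℝ) : ℂ) else 0)
                = ((2 * π : ℝ) : ℂ) := fun i => by simp
            rw [Finset.prod_congr rfl fun i _ => h0 i, Finset.prod_const, Finset.card_univ,
              Fintype.card_fin]
            simp [wP]
          · have : ∃ i, (x - y) i ≠ 0 := by
              by_contra hall
              push_neg at hall
              apply hxy
              funext i
              have := hall i
              simpa [sub_eq_zero] using this
            obtain ⟨i, hi⟩ := this
            rw [Finset.prod_eq_zero (Finset.mem_univ i) (by rw [if_neg hi])]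
            simp [wP, hxy]
  | succ n ih =>
    have key : ∀ θ : Fin d → ℝ, (chf d w θ) ^ (n + 1) * phase θ (x - y)
        = ∑ s : Fin d × Bool,
            (w s : ℂ) * ((chf d w θ) ^ n * phase θ (x + step s.1 s.2 - y)) := by
      intro θ
      have hph : ∀ s : Fin d × Bool,
          phase θ (x + step s.1 s.2 - y) = phase θ (x - y) * phase θ (step s.1 s.2) := by
        intro s
        rw [← phase_add]
        congr 1
        abel
      calc (chf d w θ) ^ (n + 1) * phase θ (x - y)
          = ((chf d w θ) ^ n * phase θ (x - y)) * chf d w θ := by ring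
        _ = ∑ s : Fin d × Bool,
              (w s : ℂ) * ((chf d w θ) ^ n * phase θ (x + step s.1 s.2 - y)) := by
            rw [chf, Finset.mul_sum]
            refine Finset.sum_congr rfl fun s _ => ?_
            rw [hph s]
            ring
    rw [MeasureTheory.setIntegral_congr_fun measurableSet_box fun θ _ => key θ]
    rw [MeasureTheory.integral_finset_sum]
    · have : ∀ s : Fin d × Bool,
          ∫ θ in box d, (w s : ℂ) * ((chf d w θ) ^ n * phase θ (x + step s.1 s.2 - y))
            = (w s : ℂ) * ((((2 * π) ^ d : ℝ) : ℂ) * wP d w n (x + step s.1 s.2) y) := by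
        intro s
        rw [MeasureTheory.integral_const_mul, ih]
      simp_rw [this]
      rw [wP]
      push_cast
      rw [Finset.mul_sum]
      exact Finset.sum_congr rfl fun s _ => by ring
    · intro s _
      apply integrableOn_box
      exact continuous_const.mul (((continuous_chf w).pow n).mul (continuous_phase _))

lemma phase_step (θ : Fin d → ℝ) (i : Fin d) (b : Bool) :
    phase θ (step i b) = Complex.exp (((if b then θ i else -θ i) : ℝ) * Complex.I) := by
  rw [phase]
  congr 2
  have h : ∀ j, θ j * ((step i b j : ℤ) : ℝ) = if j = i then (if b then θ i else -θ i) else 0 := by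
    intro j
    by_cases h : j = i <;> cases b <;> simp [step, h]
  rw [Finset.sum_congr rfl fun j _ => h j, Finset.sum_ite_eq' Finset.univ i
    (fun _ => if b then θ i else -θ i)]
  simp

lemma chf_apply (w : Fin d × Bool → ℝ) (θ : Fin d → ℝ) :
    chf d w θ = ∑ i, ((w (i, true) : ℂ) * Complex.exp ((θ i : ℝ) * Complex.I)
      + (w (i, false) : ℂ) * Complex.exp (((-θ i : ℝ)) * Complex.I)) := by
  rw [chf, Fintype.sum_prod_type]
  refine Finset.sum_congr rfl fun i _ => ?_
  rw [Fintype.sum_bool]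
  rw [phase_step, phase_step]
  norm_num

lemma chf_re (w : Fin d × Bool → ℝ) (θ : Fin d → ℝ) :
    (chf d w θ).re = ∑ i, (w (i, true) + w (i, false)) * Real.cos (θ i) := by
  rw [chf_apply, Complex.re_sum]
  refine Finset.sum_congr rfl fun i _ => ?_
  have hre : (Complex.exp (-((θ i : ℂ) * Complex.I))).re = Real.cos (θ i) := by
    rw [show -((θ i : ℂ) * Complex.I) = ((-θ i : ℝ) : ℂ) * Complex.I by push_cast; ring,
      Complex.exp_ofReal_mul_I_re, Real.cos_neg]
  simp [Complex.add_re, Complex.mul_re, Complex.exp_ofReal_mul_I_re,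
    Complex.exp_ofReal_mul_I_im, hre]
  ring

lemma chf_im (w : Fin d × Bool → ℝ) (θ : Fin d → ℝ) :
    (chf d w θ).im = ∑ i, (w (i, true) - w (i, false)) * Real.sin (θ i) := by
  rw [chf_apply, Complex.im_sum]
  refine Finset.sum_congr rfl fun i _ => ?_
  have him : (Complex.exp (-((θ i : ℂ) * Complex.I))).im = -Real.sin (θ i) := by
    rw [show -((θ i : ℂ) * Complex.I) = ((-θ i : ℝ) : ℂ) * Complex.I by push_cast; ring,
      Complex.exp_ofReal_mul_I_im, Real.sin_neg]
  simp [Complex.add_im, Complex.mul_im, Complex.exp_ofReal_mul_I_re,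
    Complex.exp_ofReal_mul_I_im, him]
  ring

lemma chf_norm_le_one {w : Fin d × Bool → ℝ} (hw : ∀ s, 0 ≤ w s) (h1 : ∑ s, w s = 1)
    (θ : Fin d → ℝ) : ‖chf d w θ‖ ≤ 1 := by
  rw [chf]
  refine le_trans (norm_sum_le _ _) ?_
  rw [← h1]
  refine Finset.sum_le_sum fun s _ => ?_
  rw [norm_mul]
  have h2 : ‖phase θ (step s.1 s.2)‖ = 1 := by
    rw [phase, Complex.norm_exp]
    simp
  rw [h2, mul_one, Complex.norm_real, Real.norm_eq_abs, abs_of_nonneg (hw s)]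

lemma chf_sq_le {w : Fin d × Bool → ℝ} {w0 : ℝ} (h0 : 0 ≤ w0) (hw : ∀ s, w0 ≤ w s)
    (h1 : ∑ s, w s = 1) (θ : Fin d → ℝ) :
    ‖chf d w θ‖ ^ 2 ≤ 1 - 2 * w0 * ∑ i, Real.sin (θ i) ^ 2 := by
  set a := fun i : Fin d => w (i, true) + w (i, false) with ha_def
  set b := fun i : Fin d => w (i, true) - w (i, false) with hb_def
  have hwnn : ∀ s, 0 ≤ w s := fun s => le_trans h0 (hw s)
  have ha : ∀ i, 0 ≤ a i := fun i => add_nonneg (hwnn _) (hwnn _)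
  have hsum_a : ∑ i, a i = 1 := by
    rw [← h1, Fintype.sum_prod_type]
    exact Finset.sum_congr rfl fun i _ => by rw [Fintype.sum_bool]
  have hab : ∀ i, |b i| ≤ a i - 2 * w0 := by
    intro i
    refine abs_le.2 ⟨?_, ?_⟩
    · have := hw (i, true); simp only [ha_def, hb_def]; linarith
    · have := hw (i, false); simp only [ha_def, hb_def]; linarith
  have habs_b : ∑ i, |b i| ≤ 1 := by
    rw [← hsum_a]
    refine Finset.sum_le_sum fun i _ => ?_
    have := hab i
    linarith [mul_nonneg (by norm_num : (0:ℝ) ≤ 2) h0]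
  -- Cauchy-Schwarz for the real part
  have cs1 : (∑ i, a i * Real.cos (θ i)) ^ 2 ≤ ∑ i, a i * Real.cos (θ i) ^ 2 := by
    have h := Finset.sum_mul_sq_le_sq_mul_sq Finset.univ (fun i => Real.sqrt (a i))
      (fun i => Real.sqrt (a i) * Real.cos (θ i))
    have e1 : ∀ i : Fin d, Real.sqrt (a i) * (Real.sqrt (a i) * Real.cos (θ i))
        = a i * Real.cos (θ i) := fun i => by
      rw [← mul_assoc, Real.mul_self_sqrt (ha i)]
    have e2 : ∀ i : Fin d, Real.sqrt (a i) ^ 2 = a i := fun i => Real.sq_sqrt (ha i)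
    have e3 : ∀ i : Fin d, (Real.sqrt (a i) * Real.cos (θ i)) ^ 2
        = a i * Real.cos (θ i) ^ 2 := fun i => by
      rw [mul_pow, Real.sq_sqrt (ha i)]
    rw [Finset.sum_congr rfl fun i _ => e1 i, Finset.sum_congr rfl fun i _ => e2 i,
      Finset.sum_congr rfl fun i _ => e3 i, hsum_a, one_mul] at h
    exact h
  -- Cauchy-Schwarz for the imaginary part
  have cs2 : (∑ i, b i * Real.sin (θ i)) ^ 2 ≤ ∑ i, |b i| * Real.sin (θ i) ^ 2 := by
    have step1 : (∑ i, b i * Real.sin (θ i)) ^ 2 ≤ (∑ i, |b i| * |Real.sin (θ i)|) ^ 2 := by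
      rw [← sq_abs]
      refine pow_le_pow_left₀ (abs_nonneg _) ?_ 2
      refine le_trans (Finset.abs_sum_le_sum_abs _ _) ?_
      refine le_of_eq (Finset.sum_congr rfl fun i _ => abs_mul _ _)
    have step2 : (∑ i, |b i| * |Real.sin (θ i)|) ^ 2
        ≤ (∑ i, |b i|) * ∑ i, |b i| * Real.sin (θ i) ^ 2 := by
      have h := Finset.sum_mul_sq_le_sq_mul_sq Finset.univ (fun i => Real.sqrt |b i|)
        (fun i => Real.sqrt |b i| * |Real.sin (θ i)|)
      have e1 : ∀ i : Fin d, Real.sqrt |b i| * (Real.sqrt |b i| * |Real.sin (θ i)|)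
          = |b i| * |Real.sin (θ i)| := fun i => by
        rw [← mul_assoc, Real.mul_self_sqrt (abs_nonneg _)]
      have e2 : ∀ i : Fin d, Real.sqrt |b i| ^ 2 = |b i| := fun i => Real.sq_sqrt (abs_nonneg _)
      have e3 : ∀ i : Fin d, (Real.sqrt |b i| * |Real.sin (θ i)|) ^ 2
          = |b i| * Real.sin (θ i) ^ 2 := fun i => by
        rw [mul_pow, Real.sq_sqrt (abs_nonneg _), sq_abs]
      rw [Finset.sum_congr rfl fun i _ => e1 i, Finset.sum_congr rfl fun i _ => e2 i,
        Finset.sum_congr rfl fun i _ => e3 i] at h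
      exact h
    have hnn : 0 ≤ ∑ i, |b i| * Real.sin (θ i) ^ 2 :=
      Finset.sum_nonneg fun i _ => mul_nonneg (abs_nonneg _) (sq_nonneg _)
    calc (∑ i, b i * Real.sin (θ i)) ^ 2
        ≤ (∑ i, |b i| * |Real.sin (θ i)|) ^ 2 := step1
      _ ≤ (∑ i, |b i|) * ∑ i, |b i| * Real.sin (θ i) ^ 2 := step2
      _ ≤ 1 * ∑ i, |b i| * Real.sin (θ i) ^ 2 := mul_le_mul_of_nonneg_right habs_b hnn
      _ = ∑ i, |b i| * Real.sin (θ i) ^ 2 := one_mul _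
  have hnorm : ‖chf d w θ‖ ^ 2 = (chf d w θ).re ^ 2 + (chf d w θ).im ^ 2 := by
    rw [Complex.sq_norm, Complex.normSq_apply]
    ring
  rw [hnorm, chf_re, chf_im]
  have final : ∑ i, a i * Real.cos (θ i) ^ 2 + ∑ i, |b i| * Real.sin (θ i) ^ 2
      ≤ 1 - 2 * w0 * ∑ i, Real.sin (θ i) ^ 2 := by
    rw [← Finset.sum_add_distrib]
    have : ∀ i : Fin d, a i * Real.cos (θ i) ^ 2 + |b i| * Real.sin (θ i) ^ 2
        ≤ a i - 2 * w0 * Real.sin (θ i) ^ 2 := by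
      intro i
      have hc : Real.cos (θ i) ^ 2 = 1 - Real.sin (θ i) ^ 2 := Real.cos_sq' (θ i)
      have hs : Real.sin (θ i) ^ 2 ≤ 1 := by
        rw [← hc] at *
        nlinarith [sq_nonneg (Real.cos (θ i)), Real.neg_one_le_sin (θ i), Real.sin_le_one (θ i)]
      rw [hc]
      nlinarith [mul_nonneg (sub_nonneg.2 (hab i)) (sq_nonneg (Real.sin (θ i)))]
    refine le_trans (Finset.sum_le_sum fun i _ => this i) ?_
    rw [Finset.sum_sub_distrib, hsum_a, ← Finset.mul_sum]
  calc (∑ i, a i * Real.cos (θ i)) ^ 2 + (∑ i, b i * Real.sin (θ i)) ^ 2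
      ≤ ∑ i, a i * Real.cos (θ i) ^ 2 + ∑ i, |b i| * Real.sin (θ i) ^ 2 :=
        add_le_add cs1 cs2
    _ ≤ 1 - 2 * w0 * ∑ i, Real.sin (θ i) ^ 2 := final

lemma sin_sq_ge {t : ℝ} (h1 : -π ≤ t) (h2 : t ≤ π) :
    (2 / π) ^ 2 * min (t ^ 2) ((π - |t|) ^ 2) ≤ Real.sin t ^ 2 := by
  have hπ := Real.pi_pos
  have habs1 : |t| ≤ π := abs_le.2 ⟨h1, h2⟩
  have habs0 : (0:ℝ) ≤ |t| := abs_nonneg t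
  have hsin_abs : Real.sin t ^ 2 = Real.sin |t| ^ 2 := by
    rcases abs_cases t with ⟨h, _⟩ | ⟨h, _⟩
    · rw [h]
    · rw [h, Real.sin_neg]; ring
  have hmin_nonneg : 0 ≤ min |t| (π - |t|) := le_min habs0 (by linarith)
  have key : 2 / π * min |t| (π - |t|) ≤ Real.sin |t| := by
    rcases le_total |t| (π / 2) with h | h
    · have hmin : min |t| (π - |t|) ≤ |t| := min_le_left _ _
      calc 2 / π * min |t| (π - |t|) ≤ 2 / π * |t| := by
            apply mul_le_mul_of_nonneg_left hmin (by positivity)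
        _ ≤ Real.sin |t| := Real.mul_le_sin habs0 h
    · have hmin : min |t| (π - |t|) ≤ π - |t| := min_le_right _ _
      have : Real.sin |t| = Real.sin (π - |t|) := (Real.sin_pi_sub _).symm
      rw [this]
      calc 2 / π * min |t| (π - |t|) ≤ 2 / π * (π - |t|) := by
            apply mul_le_mul_of_nonneg_left hmin (by positivity)
        _ ≤ Real.sin (π - |t|) := Real.mul_le_sin (by linarith) (by linarith)
  have hsq : (2 / π * min |t| (π - |t|)) ^ 2 ≤ Real.sin |t| ^ 2 := by
    apply pow_le_pow_left₀ (by positivity) key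
  rw [hsin_abs]
  refine le_trans (le_of_eq ?_) hsq
  rw [mul_pow]
  congr 1
  rcases le_total (|t|) (π - |t|) with h | h
  · rw [← sq_abs t, min_eq_left h]; exact min_eq_left (pow_le_pow_left₀ habs0 h 2)
  · rw [← sq_abs t, min_eq_right h]; exact min_eq_right (pow_le_pow_left₀ (by linarith) h 2)

lemma gauss_tail (a : ℝ) (ha : 0 < a) :
    ∫ t in (0:ℝ)..π, Real.exp (-a * t ^ 2) ≤ Real.sqrt (π / a) / 2 := by
  rw [intervalIntegral.integral_of_le (le_of_lt Real.pi_pos)]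
  calc ∫ t in Set.Ioc (0:ℝ) π, Real.exp (-a * t ^ 2)
      ≤ ∫ t in Set.Ioi (0:ℝ), Real.exp (-a * t ^ 2) := by
        apply MeasureTheory.setIntegral_mono_set
          ((integrable_exp_neg_mul_sq ha).integrableOn)
          (Filter.Eventually.of_forall fun t => le_of_lt (Real.exp_pos _))
          (Filter.Eventually.of_forall fun t ht => ht.1)
    _ = Real.sqrt (π / a) / 2 := integral_gaussian_Ioi a

lemma coord_int_bound {c : ℝ} (hc : 0 < c) :
    ∫ t in Set.Icc (-π) π, Real.exp (-c * Real.sin t ^ 2)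
      ≤ 2 * Real.sqrt (π / (4 * c / π ^ 2)) := by
  have hπ := Real.pi_pos
  set a := 4 * c / π ^ 2 with ha_def
  have ha : 0 < a := by positivity
  have hpt : ∀ t ∈ Set.Icc (-π) π, Real.exp (-c * Real.sin t ^ 2)
      ≤ Real.exp (-a * t ^ 2) + Real.exp (-a * (π - |t|) ^ 2) := by
    intro t ht
    have hs := sin_sq_ge ht.1 ht.2
    have hkey : a * min (t ^ 2) ((π - |t|) ^ 2) ≤ c * Real.sin t ^ 2 := by
      have : a * min (t ^ 2) ((π - |t|) ^ 2) = c * ((2/π)^2 * min (t ^ 2) ((π - |t|) ^ 2)) := by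
        rw [ha_def]; field_simp; ring
      rw [this]
      exact mul_le_mul_of_nonneg_left hs (le_of_lt hc)
    rcases min_cases (t ^ 2) ((π - |t|) ^ 2) with ⟨hmin, _⟩ | ⟨hmin, _⟩
    · rw [hmin] at hkey
      have : Real.exp (-c * Real.sin t ^ 2) ≤ Real.exp (-a * t ^ 2) := by
        apply Real.exp_le_exp.2; linarith
      linarith [Real.exp_pos (-a * (π - |t|) ^ 2)]
    · rw [hmin] at hkey
      have : Real.exp (-c * Real.sin t ^ 2) ≤ Real.exp (-a * (π - |t|) ^ 2) := by
        apply Real.exp_le_exp.2; linarith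
      linarith [Real.exp_pos (-a * t ^ 2)]
  have hint1 : IntegrableOn (fun t : ℝ => Real.exp (-c * Real.sin t ^ 2)) (Set.Icc (-π) π) := by
    apply Continuous.integrableOn_Icc; continuity
  have hint2 : IntegrableOn (fun t : ℝ => Real.exp (-a * t ^ 2)
      + Real.exp (-a * (π - |t|) ^ 2)) (Set.Icc (-π) π) := by
    apply Continuous.integrableOn_Icc
    apply Continuous.add
    · continuity
    · apply Real.continuous_exp.comp
      apply Continuous.mul continuous_const
      apply Continuous.pow
      exact continuous_const.sub continuous_abs
  calc ∫ t in Set.Icc (-π) π, Real.exp (-c * Real.sin t ^ 2)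
      ≤ ∫ t in Set.Icc (-π) π,
          (Real.exp (-a * t ^ 2) + Real.exp (-a * (π - |t|) ^ 2)) :=
        MeasureTheory.setIntegral_mono_on hint1 hint2 measurableSet_Icc hpt
    _ = (∫ t in Set.Icc (-π) π, Real.exp (-a * t ^ 2))
        + ∫ t in Set.Icc (-π) π, Real.exp (-a * (π - |t|) ^ 2) := by
        apply MeasureTheory.integral_add
        · apply Continuous.integrableOn_Icc; continuity
        · apply Continuous.integrableOn_Icc
          apply Real.continuous_exp.comp
          apply Continuous.mul continuous_const
          apply Continuous.pow
          exact continuous_const.sub continuous_abs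
    _ ≤ Real.sqrt (π / a) + Real.sqrt (π / a) := by
        gcongr
        · -- Gaussian term
          calc ∫ t in Set.Icc (-π) π, Real.exp (-a * t ^ 2)
              ≤ ∫ t : ℝ, Real.exp (-a * t ^ 2) :=
              MeasureTheory.setIntegral_le_integral (integrable_exp_neg_mul_sq ha)
                (Filter.Eventually.of_forall fun t => le_of_lt (Real.exp_pos _))
            _ = Real.sqrt (π / a) := integral_gaussian a
        · -- shifted Gaussian term
          rw [MeasureTheory.integral_Icc_eq_integral_Ioc,
            ← intervalIntegral.integral_of_le (by linarith : -π ≤ π)]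
          have hii : ∀ u v : ℝ, IntervalIntegrable
              (fun t => Real.exp (-a * (π - |t|) ^ 2)) volume u v := by
            intro u v
            apply Continuous.intervalIntegrable
            apply Real.continuous_exp.comp
            apply Continuous.mul continuous_const
            apply Continuous.pow
            exact continuous_const.sub continuous_abs
          rw [← intervalIntegral.integral_add_adjacent_intervals (b := 0) (hii _ _) (hii _ _)]
          have e1 : ∫ t in (-π:ℝ)..0, Real.exp (-a * (π - |t|) ^ 2)
              = ∫ t in (0:ℝ)..π, Real.exp (-a * t ^ 2) := by
            have : ∫ t in (-π:ℝ)..0, Real.exp (-a * (π - |t|) ^ 2)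
                = ∫ t in (-π:ℝ)..0, Real.exp (-a * (π + t) ^ 2) := by
              apply intervalIntegral.integral_congr
              intro t ht
              rw [Set.uIcc_of_le (by linarith : -π ≤ (0:ℝ))] at ht
              have habs : |t| = -t := abs_of_nonpos ht.2
              simp only [habs]
              ring_nf
            rw [this]
            have := intervalIntegral.integral_comp_add_right
              (fun u => Real.exp (-a * u ^ 2)) π (a := -π) (b := 0)
            simp only [neg_add_cancel, zero_add] at this
            rw [← this]
            apply intervalIntegral.integral_congr
            intro t ht
            ring_nf
          have e2 : ∫ t in (0:ℝ)..π, Real.exp (-a * (π - |t|) ^ 2)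
              = ∫ t in (0:ℝ)..π, Real.exp (-a * t ^ 2) := by
            have : ∫ t in (0:ℝ)..π, Real.exp (-a * (π - |t|) ^ 2)
                = ∫ t in (0:ℝ)..π, Real.exp (-a * (π - t) ^ 2) := by
              apply intervalIntegral.integral_congr
              intro t ht
              rw [Set.uIcc_of_le (by linarith : (0:ℝ) ≤ π)] at ht
              simp only [abs_of_nonneg ht.1]
            rw [this]
            have := intervalIntegral.integral_comp_sub_left
              (fun u => Real.exp (-a * u ^ 2)) π (a := 0) (b := π)
            simp only [sub_self, sub_zero] at this
            rw [this]
          rw [e1, e2]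
          have := gauss_tail a ha
          linarith
    _ = 2 * Real.sqrt (π / a) := by ring

lemma wP_le_integral (w : Fin d × Bool → ℝ) (n : ℕ) (x y : Site d) :
    ((2 * π) ^ d) * wP d w n x y ≤ ∫ θ in box d, ‖chf d w θ‖ ^ n := by
  have hid := wP_fourier w n x y
  have hre : ((2 * π) ^ d : ℝ) * wP d w n x y
      = (∫ θ in box d, (chf d w θ) ^ n * phase θ (x - y)).re := by
    rw [hid, show (((2 * π) ^ d : ℝ) : ℂ) * ((wP d w n x y : ℝ) : ℂ)
      = (((2 * π) ^ d * wP d w n x y : ℝ) : ℂ) by push_cast; ring, Complex.ofReal_re]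
  rw [hre]
  refine le_trans (Complex.re_le_norm _) ?_
  refine le_trans (MeasureTheory.norm_integral_le_integral_norm _) ?_
  refine le_of_eq (MeasureTheory.setIntegral_congr_fun measurableSet_box fun θ _ => ?_)
  rw [norm_mul, norm_pow]
  have h1 : ‖phase θ (x - y)‖ = 1 := by
    rw [phase, Complex.norm_exp]
    simp
  rw [h1, mul_one]

lemma wP_bound {w : Fin d × Bool → ℝ} {w0 : ℝ} (h0 : 0 < w0) (hw : ∀ s, w0 ≤ w s)
    (h1 : ∑ s, w s = 1) {n : ℕ} (hn : 1 ≤ n / 2) (x y : Site d) :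
    wP d w n x y ≤ Real.sqrt (π / (8 * w0 * (n / 2 : ℕ))) ^ d := by
  have hπ := Real.pi_pos
  have hwnn : ∀ s, 0 ≤ w s := fun s => le_trans h0.le (hw s)
  set m := n / 2 with hm_def
  have hm : (0:ℝ) < (m:ℕ) := by exact_mod_cast hn
  set c := 2 * w0 * (m:ℝ) with hc_def
  have hc : 0 < c := by positivity
  -- pointwise bound
  have hpt : ∀ θ : Fin d → ℝ, ‖chf d w θ‖ ^ n ≤ ∏ i, Real.exp (-c * Real.sin (θ i) ^ 2) := by
    intro θ
    have hb0 : 0 ≤ ‖chf d w θ‖ := norm_nonneg _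
    have hb1 : ‖chf d w θ‖ ≤ 1 := chf_norm_le_one hwnn h1 θ
    have h2m : 2 * m ≤ n := by omega
    have hsq := chf_sq_le h0.le hw h1 θ
    have hub : 0 ≤ 1 - 2 * w0 * ∑ i, Real.sin (θ i) ^ 2 :=
      le_trans (pow_nonneg hb0 2) hsq
    have hexp : 1 - 2 * w0 * ∑ i, Real.sin (θ i) ^ 2
        ≤ Real.exp (-(2 * w0 * ∑ i, Real.sin (θ i) ^ 2)) := by
      have := Real.add_one_le_exp (-(2 * w0 * ∑ i, Real.sin (θ i) ^ 2))
      linarith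
    calc ‖chf d w θ‖ ^ n ≤ ‖chf d w θ‖ ^ (2 * m) := pow_le_pow_of_le_one hb0 hb1 h2m
      _ = (‖chf d w θ‖ ^ 2) ^ m := by rw [← pow_mul]
      _ ≤ (1 - 2 * w0 * ∑ i, Real.sin (θ i) ^ 2) ^ m :=
          pow_le_pow_left₀ (pow_nonneg hb0 2) hsq m
      _ ≤ Real.exp (-(2 * w0 * ∑ i, Real.sin (θ i) ^ 2)) ^ m :=
          pow_le_pow_left₀ hub hexp m
      _ = Real.exp (-c * ∑ i, Real.sin (θ i) ^ 2) := by
          rw [← Real.exp_nat_mul]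
          congr 1
          rw [hc_def]
          ring
      _ = ∏ i, Real.exp (-c * Real.sin (θ i) ^ 2) := by
          rw [← Real.exp_sum]
          congr 1
          rw [← Finset.mul_sum]
  -- integral bound
  have hcont_prod : Continuous fun θ : Fin d → ℝ => ∏ i, Real.exp (-c * Real.sin (θ i) ^ 2) := by
    apply continuous_finset_prod
    intro i _
    apply Real.continuous_exp.comp
    apply Continuous.mul continuous_const
    exact (Real.continuous_sin.comp (continuous_apply i)).pow 2
  have hIbound : ∫ θ in box d, ‖chf d w θ‖ ^ n
      ≤ ((2 * π) * Real.sqrt (π / (8 * w0 * (m:ℕ)))) ^ d := by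
    calc ∫ θ in box d, ‖chf d w θ‖ ^ n
        ≤ ∫ θ in box d, ∏ i, Real.exp (-c * Real.sin (θ i) ^ 2) :=
          MeasureTheory.setIntegral_mono_on
            (integrableOn_box (((continuous_chf w).norm).pow n))
            (integrableOn_box hcont_prod) measurableSet_box (fun θ _ => hpt θ)
      _ = ∏ i : Fin d, ∫ t in Set.Icc (-π) π, Real.exp (-c * Real.sin t ^ 2) :=
          integral_box_prod (𝕜 := ℝ) (fun _ t => Real.exp (-c * Real.sin t ^ 2))
            (fun i => by
              apply Continuous.integrableOn_Icc
              continuity)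
      _ ≤ ∏ _i : Fin d, ((2 * π) * Real.sqrt (π / (8 * w0 * (m:ℕ)))) := by
          apply Finset.prod_le_prod
          · intro i _
            apply MeasureTheory.setIntegral_nonneg measurableSet_Icc
            intro t _
            exact (Real.exp_pos _).le
          · intro i _
            refine le_trans (coord_int_bound hc) (le_of_eq ?_)
            have h4c : 4 * c = 8 * w0 * (m:ℕ) := by rw [hc_def]; ring
            have harg : π / (4 * c / π ^ 2) = π ^ 2 * (π / (4 * c)) := by
              field_simp
            rw [harg, Real.sqrt_mul (sq_nonneg π), Real.sqrt_sq hπ.le, h4c]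
            ring
      _ = ((2 * π) * Real.sqrt (π / (8 * w0 * (m:ℕ)))) ^ d := by
          rw [Finset.prod_const, Finset.card_univ, Fintype.card_fin]
  have hfinal := le_trans (wP_le_integral w n x y) hIbound
  have hpow : ((2 * π) * Real.sqrt (π / (8 * w0 * (m:ℕ)))) ^ d
      = (2 * π) ^ d * Real.sqrt (π / (8 * w0 * (m:ℕ))) ^ d := mul_pow _ _ _
  rw [hpow] at hfinal
  have hpos : (0:ℝ) < (2 * π) ^ d := by positivity
  exact le_of_mul_le_mul_left hfinal hpos

lemma main_est (hd : 0 < d) {n : ℕ} (hn : 2 ≤ n) (x y : Site d)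
    (hrn : (dist1 x y : ℝ) ≤ n) :
    srwP d n x y ≤ Real.exp (-(dist1 x y : ℝ) ^ 2 / (3 * (d:ℝ) ^ 2 * n)) *
      (Real.sqrt (π * d * Real.exp 1 ^ 2) ^ d / Real.sqrt n ^ d) := by
  have hπ := Real.pi_pos
  have hD1 : (1:ℝ) ≤ (d:ℝ) := by exact_mod_cast hd
  have hN2 : (2:ℝ) ≤ (n:ℝ) := by exact_mod_cast hn
  have hN0 : (0:ℝ) < (n:ℝ) := by linarith
  have he2 : (2:ℝ) ≤ Real.exp 1 := by
    have := Real.add_one_le_exp 1; linarith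
  set r : ℝ := (dist1 x y : ℝ) with hr_def
  have hr0 : (0:ℝ) ≤ r := Nat.cast_nonneg _
  -- choose the coordinate with maximal displacement
  obtain ⟨i₀, -, hmax⟩ := Finset.exists_max_image Finset.univ
    (fun i => (x i - y i).natAbs) (Finset.univ_nonempty_iff.2 ⟨⟨0, hd⟩⟩)
  have hrd : r ≤ (d:ℝ) * ((x i₀ - y i₀).natAbs : ℝ) := by
    have : dist1 x y ≤ d * (x i₀ - y i₀).natAbs := by
      calc dist1 x y ≤ Finset.univ.card • (x i₀ - y i₀).natAbs :=
            Finset.sum_le_card_nsmul _ _ _ fun i _ => hmax i (Finset.mem_univ i)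
        _ = d * (x i₀ - y i₀).natAbs := by
            rw [Finset.card_univ, Fintype.card_fin, smul_eq_mul]
    rw [hr_def]
    push_cast
    exact_mod_cast this
  set Na : ℝ := ((x i₀ - y i₀).natAbs : ℝ) with hNa_def
  have hNa0 : 0 ≤ Na := Nat.cast_nonneg _
  set t : ℝ := 2 * r / (3 * d * n) with ht_def
  have ht0 : 0 ≤ t := by positivity
  have ht1 : t ≤ 1 := by
    rw [ht_def, div_le_one (by positivity)]
    nlinarith
  set sg : ℝ := if (0:ℤ) ≤ y i₀ - x i₀ then 1 else -1 with hsg_def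
  set l : Fin d → ℝ := fun j => if j = i₀ then sg * t else 0 with hl_def
  have hdot : ∀ v : Site d, dot l v = sg * t * ((v i₀ : ℤ) : ℝ) := by
    intro v
    rw [dot, Finset.sum_eq_single i₀]
    · simp [hl_def]
    · intro j _ hj; simp [hl_def, hj]
    · intro h; exact absurd (Finset.mem_univ i₀) h
  have hsg_abs : sg * ((y i₀ - x i₀ : ℤ) : ℝ) = Na := by
    rw [hNa_def, hsg_def]
    have hswap : ((x i₀ - y i₀).natAbs : ℝ) = ((y i₀ - x i₀).natAbs : ℝ) := by
      rw [← Int.natAbs_neg (x i₀ - y i₀), neg_sub]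
    rw [hswap, Nat.cast_natAbs]
    split_ifs with h
    · have : (0:ℝ) ≤ ((y i₀ - x i₀ : ℤ) : ℝ) := by exact_mod_cast h
      rw [one_mul]
      push_cast
      rw [abs_of_nonneg (by push_cast at this ⊢; linarith)]
    · push_neg at h
      have : ((y i₀ - x i₀ : ℤ) : ℝ) < 0 := by exact_mod_cast h
      push_cast
      rw [abs_of_neg (by push_cast at this ⊢; linarith)]
      ring
  have hdotyx : dot l (y - x) = t * Na := by
    rw [hdot]
    have : ((y - x : Site d) i₀ : ℤ) = y i₀ - x i₀ := rfl
    rw [this]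
    calc sg * t * ((y i₀ - x i₀ : ℤ) : ℝ) = t * (sg * ((y i₀ - x i₀ : ℤ) : ℝ)) := by ring
      _ = t * Na := by rw [hsg_abs]
  have hdot_step : ∀ (i : Fin d) (b : Bool), dot l (step i b)
      = if i = i₀ then (if b then sg * t else -(sg * t)) else 0 := by
    intro i b
    rw [hdot]
    by_cases h : i = i₀
    · subst h; cases b <;> simp [step] <;> ring
    · have hz : step i b i₀ = 0 := by
        simp only [step]
        rw [if_neg fun hh => h hh.symm]
      rw [hz]
      simp [h]
  have hZt : Zt l = Real.exp t + Real.exp (-t) + 2 * ((d:ℝ) - 1) := by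
    rw [Zt, Fintype.sum_prod_type]
    have hterm : ∀ i : Fin d, (∑ b : Bool, Real.exp (dot l (step i b)))
        = if i = i₀ then Real.exp t + Real.exp (-t) else 2 := by
      intro i
      rw [Fintype.sum_bool, hdot_step, hdot_step]
      by_cases h : i = i₀
      · rw [if_pos h, if_pos h, if_pos h]
        have hsg2 : sg = 1 ∨ sg = -1 := by
          rw [hsg_def]; split_ifs <;> simp
        norm_num
        rcases hsg2 with h1 | h1 <;> rw [h1] <;> norm_num [add_comm]
      · rw [if_neg h, if_neg h, if_neg h]
        norm_num
    rw [Finset.sum_congr rfl fun i _ => hterm i,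
      ← Finset.add_sum_erase _ _ (Finset.mem_univ i₀), if_pos rfl]
    have : ∑ i ∈ Finset.univ.erase i₀, (if i = i₀ then Real.exp t + Real.exp (-t) else 2)
        = 2 * ((d:ℝ) - 1) := by
      rw [Finset.sum_congr rfl fun i hi => if_neg (Finset.ne_of_mem_erase hi)]
      rw [Finset.sum_const, Finset.card_erase_of_mem (Finset.mem_univ i₀),
        Finset.card_univ, Fintype.card_fin, nsmul_eq_mul]
      push_cast [Nat.cast_sub hd]
      ring
    rw [this]
  have hZpos : 0 < Zt l := Zt_pos hd l
  -- the tilted weights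
  set w : Fin d × Bool → ℝ := fun s => Real.exp (dot l (step s.1 s.2)) / Zt l with hw_def
  have hsumw : ∑ s, w s = 1 := by
    rw [hw_def, ← Finset.sum_div, ← Zt, div_self hZpos.ne']
  have hZle : Zt l ≤ 2 * d * Real.exp 1 := by
    rw [hZt]
    have h1 : Real.exp t ≤ Real.exp 1 := Real.exp_le_exp.2 ht1
    have h2 : Real.exp (-t) ≤ 1 := Real.exp_le_one_iff.2 (by linarith)
    nlinarith
  set w0 : ℝ := 1 / (2 * d * Real.exp 1 ^ 2) with hw0_def
  have hw0 : 0 < w0 := by positivity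
  have hws : ∀ s, w0 ≤ w s := by
    intro s
    have hstep : -1 ≤ dot l (step s.1 s.2) := by
      rw [hdot_step]
      have habs : |sg * t| ≤ 1 := by
        rw [abs_mul, hsg_def]
        split_ifs <;> simp [abs_of_nonneg ht0] <;> linarith
      rw [abs_le] at habs
      split_ifs <;> linarith
    have hexp : Real.exp (-1) ≤ Real.exp (dot l (step s.1 s.2)) := Real.exp_le_exp.2 hstep
    rw [hw_def, hw0_def]
    have : Real.exp (-1) / (2 * d * Real.exp 1) ≤ Real.exp (dot l (step s.1 s.2)) / Zt l :=
      div_le_div₀ (Real.exp_pos _).le hexp hZpos hZle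
    refine le_trans (le_of_eq ?_) this
    rw [Real.exp_neg, inv_eq_one_div, div_div]
    congr 1
    ring
  -- apply the heat kernel bound
  have hm1 : 1 ≤ n / 2 := by omega
  have hwP := wP_bound hw0 hws hsumw hm1 x y
  have hwP2 : wP d w n x y ≤ Real.sqrt (π * d * Real.exp 1 ^ 2) ^ d / Real.sqrt n ^ d := by
    refine le_trans hwP ?_
    rw [← div_pow]
    apply pow_le_pow_left₀ (Real.sqrt_nonneg _)
    have hm4 : (n:ℝ) ≤ 4 * ((n/2 : ℕ) : ℝ) := by
      have : n ≤ 4 * (n/2) := by omega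
      exact_mod_cast this
    have hmpos : (0:ℝ) < ((n/2 : ℕ) : ℝ) := by exact_mod_cast hm1
    have harg : π / (8 * w0 * ((n/2 : ℕ) : ℝ)) = π * d * Real.exp 1 ^ 2 / (4 * ((n/2:ℕ):ℝ)) := by
      rw [hw0_def]
      field_simp
      ring
    rw [harg, ← Real.sqrt_div (by positivity) ]
    apply Real.sqrt_le_sqrt
    apply div_le_div_of_nonneg_left (by positivity) (by positivity)
    linarith
  -- the tilt identity
  have htilt := tilt hd l n x y
  have hE : (0:ℝ) < Real.exp (dot l (y - x)) := Real.exp_pos _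
  have hsrw : srwP d n x y
      = ((Zt l / (2 * d)) ^ n * Real.exp (-(dot l (y - x)))) * wP d w n x y := by
    have h1 : srwP d n x y = (Zt l / (2 * d)) ^ n * wP d w n x y / Real.exp (dot l (y - x)) := by
      rw [eq_div_iff hE.ne']
      exact htilt
    rw [h1, Real.exp_neg, div_eq_mul_inv]
    ring
  -- bound on the tilting prefactor
  have hq : Zt l / (2 * d) ≤ Real.exp (3 / (4 * d) * t ^ 2) := by
    have hb1 := Real.exp_bound (x := t) (by rwa [abs_of_nonneg ht0]) (by norm_num : 0 < 2)
    have hb2 := Real.exp_bound (x := -t) (by rwa [abs_neg, abs_of_nonneg ht0]) (by norm_num : 0 < 2)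
    have hs1 : ∑ m ∈ Finset.range 2, t ^ m / (m.factorial : ℝ) = 1 + t := by
      simp [Finset.sum_range_succ]
    have hs2 : ∑ m ∈ Finset.range 2, (-t) ^ m / (m.factorial : ℝ) = 1 - t := by
      simp [Finset.sum_range_succ]
      ring
    rw [hs1] at hb1
    rw [hs2] at hb2
    have hfac : ((2:ℕ).succ : ℝ) / ((2:ℕ).factorial * (2:ℕ) : ℝ) = 3 / 4 := by
      norm_num [Nat.factorial]
    have habs_t : |t| ^ 2 = t ^ 2 := by rw [abs_of_nonneg ht0]
    have habs_nt : |(-t)| ^ 2 = t ^ 2 := by rw [abs_neg, abs_of_nonneg ht0]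
    rw [hfac, habs_t] at hb1
    rw [hfac, habs_nt] at hb2
    rw [abs_le] at hb1 hb2
    have h1 : Real.exp t ≤ 1 + t + 3 / 4 * t ^ 2 := by linarith [hb1.2]
    have h2 : Real.exp (-t) ≤ 1 - t + 3 / 4 * t ^ 2 := by linarith [hb2.2]
    rw [div_le_iff₀ (by positivity : (0:ℝ) < 2 * d)]
    calc Zt l ≤ 2 * d + 3 / 2 * t ^ 2 := by rw [hZt]; linarith
      _ = (1 + 3 / (4 * d) * t ^ 2) * (2 * d) := by field_simp; ring
      _ ≤ Real.exp (3 / (4 * d) * t ^ 2) * (2 * d) := by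
          have := Real.add_one_le_exp (3 / (4 * d) * t ^ 2)
          have h2d : (0:ℝ) ≤ 2 * d := by positivity
          nlinarith
  have hqn : (Zt l / (2 * d)) ^ n ≤ Real.exp ((n:ℝ) * (3 / (4 * d) * t ^ 2)) := by
    calc (Zt l / (2 * d)) ^ n ≤ Real.exp (3 / (4 * d) * t ^ 2) ^ n :=
          pow_le_pow_left₀ (by positivity) hq n
      _ = Real.exp ((n:ℝ) * (3 / (4 * d) * t ^ 2)) := (Real.exp_nat_mul _ n).symm
  have hexp_ineq : (n:ℝ) * (3 / (4 * d) * t ^ 2) - t * Na ≤ -r ^ 2 / (3 * (d:ℝ) ^ 2 * n) := by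
    have hD0 : (0:ℝ) < (d:ℝ) := by linarith
    have hstep2 : (n:ℝ) * (3 / (4 * d) * t ^ 2) = r ^ 2 / (3 * (d:ℝ) ^ 3 * n) := by
      rw [ht_def]
      field_simp
      ring
    have hstep3 : t * (r / d) = 2 * r ^ 2 / (3 * (d:ℝ) ^ 2 * n) := by
      rw [ht_def]
      field_simp
    have hNa_ge : r / d ≤ Na := by
      rw [div_le_iff₀ hD0]
      linarith [hrd]
    have h4 : t * (r / d) ≤ t * Na := mul_le_mul_of_nonneg_left hNa_ge ht0
    have h5 : r ^ 2 / (3 * (d:ℝ) ^ 3 * n) ≤ r ^ 2 / (3 * (d:ℝ) ^ 2 * n) := by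
      apply div_le_div_of_nonneg_left (by positivity) (by positivity)
      have hdd : (d:ℝ) ^ 2 * (n:ℝ) ≤ (d:ℝ) ^ 3 * (n:ℝ) := by
        nlinarith [mul_nonneg (mul_nonneg (sub_nonneg.2 hD1) (sq_nonneg ((d:ℝ)))) hN0.le]
      linarith
    rw [hstep2]
    rw [hstep3] at h4
    have : -r ^ 2 / (3 * (d:ℝ) ^ 2 * n) = r ^ 2 / (3 * (d:ℝ) ^ 2 * n) - 2 * r ^ 2 / (3 * (d:ℝ) ^ 2 * n) := by
      ring
    rw [this]
    linarith
  have hpre : (Zt l / (2 * d)) ^ n * Real.exp (-(dot l (y - x)))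
      ≤ Real.exp (-r ^ 2 / (3 * (d:ℝ) ^ 2 * n)) := by
    rw [hdotyx]
    calc (Zt l / (2 * d)) ^ n * Real.exp (-(t * Na))
        ≤ Real.exp ((n:ℝ) * (3 / (4 * d) * t ^ 2)) * Real.exp (-(t * Na)) :=
          mul_le_mul_of_nonneg_right hqn (Real.exp_pos _).le
      _ = Real.exp ((n:ℝ) * (3 / (4 * d) * t ^ 2) - t * Na) := by
          rw [← Real.exp_add]
          ring_nf
      _ ≤ Real.exp (-r ^ 2 / (3 * (d:ℝ) ^ 2 * n)) := Real.exp_le_exp.2 hexp_ineq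
  have hwP_nonneg : 0 ≤ wP d w n x y :=
    wP_nonneg (fun s => div_nonneg (Real.exp_pos _).le hZpos.le) n x y
  calc srwP d n x y
      = ((Zt l / (2 * d)) ^ n * Real.exp (-(dot l (y - x)))) * wP d w n x y := hsrw
    _ ≤ Real.exp (-r ^ 2 / (3 * (d:ℝ) ^ 2 * n)) *
        (Real.sqrt (π * d * Real.exp 1 ^ 2) ^ d / Real.sqrt n ^ d) :=
        mul_le_mul hpre hwP2 hwP_nonneg (Real.exp_pos _).le


lemma srwP_le_one (hd : 0 < d) (n : ℕ) (x y : Site d) : srwP d n x y ≤ 1 := by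
  rw [srwP_eq_wP]
  have hD0 : (0:ℝ) < d := by exact_mod_cast hd
  refine wP_le_one (fun s => by positivity) ?_ n x y
  rw [Finset.sum_const, Finset.card_univ,
    show Fintype.card (Fin d × Bool) = d * 2 by simp, nsmul_eq_mul]
  push_cast
  field_simp

end SRW

/-- Gaussian upper bound for the simple random walk on `ℤ^d`. -/
theorem gaussian_upper_bound (d : ℕ) (hd : 0 < d) :
    ∃ C1 C2 : ℝ, 0 < C1 ∧ 0 < C2 ∧
      ∀ n : ℕ, 1 ≤ n → ∀ x y : Site d,
        srwP d n x y ≤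
          C2 / (n : ℝ) ^ ((d : ℝ) / 2) *
            Real.exp (-C1 * (dist1 x y : ℝ) ^ 2 / (n : ℝ)) := by
  have hπ := Real.pi_pos
  have hD1 : (1:ℝ) ≤ (d:ℝ) := by exact_mod_cast hd
  have he2 : (2:ℝ) ≤ Real.exp 1 := by linarith [Real.add_one_le_exp 1]
  refine ⟨1 / (3 * (d:ℝ) ^ 2), Real.exp 1 * Real.sqrt (π * d * Real.exp 1 ^ 2) ^ d,
    by positivity, by positivity, ?_⟩
  intro n hn x y
  have hN0 : (0:ℝ) < (n:ℝ) := by exact_mod_cast hn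
  have hpd : (3:ℝ) ≤ π * d := by nlinarith [Real.pi_gt_three]
  have he4 : (4:ℝ) ≤ Real.exp 1 ^ 2 := by nlinarith
  have hsqrt1 : (1:ℝ) ≤ Real.sqrt (π * d * Real.exp 1 ^ 2) :=
    Real.one_le_sqrt.2 (by nlinarith [mul_le_mul hpd he4 (by norm_num : (0:ℝ) ≤ 4) (by linarith)])
  have hSd : (1:ℝ) ≤ Real.sqrt (π * d * Real.exp 1 ^ 2) ^ d := one_le_pow₀ hsqrt1
  have hrpow : ((n:ℝ)) ^ ((d:ℝ)/2) = Real.sqrt n ^ d := by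
    rw [show (d:ℝ)/2 = (1/2) * (d:ℕ) by push_cast; ring, Real.rpow_mul hN0.le,
      Real.rpow_natCast, Real.sqrt_eq_rpow]
  have hrpow_pos : 0 < ((n:ℝ)) ^ ((d:ℝ)/2) := by
    rw [hrpow]
    exact pow_pos (Real.sqrt_pos.2 hN0) d
  set r : ℝ := (dist1 x y : ℝ) with hr_def
  have hr0 : 0 ≤ r := Nat.cast_nonneg _
  by_cases hrn : r ≤ (n:ℝ)
  · by_cases hn2 : 2 ≤ n
    · have hme := SRW.main_est hd hn2 x y hrn
      refine le_trans hme ?_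
      rw [hrpow]
      have hexp_eq : Real.exp (-r ^ 2 / (3 * (d:ℝ) ^ 2 * n))
          = Real.exp (-(1 / (3 * (d:ℝ) ^ 2)) * r ^ 2 / n) := by
        congr 1
        field_simp
      rw [hexp_eq]
      set E := Real.exp (-(1 / (3 * (d:ℝ) ^ 2)) * r ^ 2 / n) with hE_def
      have hEpos : 0 < E := Real.exp_pos _
      set A := Real.sqrt (π * d * Real.exp 1 ^ 2) ^ d with hA_def
      set B := Real.sqrt (n:ℝ) ^ d with hB_def
      have hApos : (0:ℝ) < A := by positivity
      have hBpos : (0:ℝ) < B := pow_pos (Real.sqrt_pos.2 hN0) d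
      calc E * (A / B) ≤ Real.exp 1 * (E * (A / B)) :=
            le_mul_of_one_le_left (by positivity) (by linarith)
        _ = Real.exp 1 * A / B * E := by ring
    · have hn1 : n = 1 := by omega
      subst hn1
      have h1 : srwP d 1 x y ≤ 1 := SRW.srwP_le_one hd 1 x y
      refine le_trans h1 ?_
      rw [Nat.cast_one, Real.one_rpow, div_one]
      have hr1 : r ≤ 1 := by exact_mod_cast hrn
      have hr2 : r ^ 2 ≤ 1 := by nlinarith
      have harg : -(1:ℝ)/3 ≤ -(1 / (3 * (d:ℝ) ^ 2)) * r ^ 2 / 1 := by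
        rw [div_one]
        have hd2 : (1:ℝ) ≤ (d:ℝ) ^ 2 := by nlinarith
        have hfrac : 1 / (3 * (d:ℝ) ^ 2) ≤ 1/3 := by
          apply div_le_div_of_nonneg_left (by norm_num) (by norm_num)
          linarith
        have hfrac0 : 0 ≤ 1 / (3 * (d:ℝ) ^ 2) := by positivity
        nlinarith
      have hexp_ge : (2:ℝ)/3 ≤ Real.exp (-(1 / (3 * (d:ℝ) ^ 2)) * r ^ 2 / 1) := by
        calc (2:ℝ)/3 = -(1:ℝ)/3 + 1 := by norm_num
          _ ≤ Real.exp (-(1:ℝ)/3) := Real.add_one_le_exp _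
          _ ≤ _ := Real.exp_le_exp.2 harg
      set S := Real.sqrt (π * d * Real.exp 1 ^ 2) ^ d
      have hES : (2:ℝ) ≤ Real.exp 1 * S := by nlinarith
      have hfin := mul_le_mul hES hexp_ge (by norm_num) (by linarith)
      linarith
  · have hlt : n < dist1 x y := by
      by_contra h
      push_neg at h
      apply hrn
      rw [hr_def]
      exact_mod_cast h
    rw [SRW.srwP_eq_zero hlt]
    positivity
end

section
/- Fix γ ∈ (0,1) and d = 2. With G^{(γ)}(x,y) = Σ_{n≥0} (4/(4+γ))^n p_n(x,y), there exists C > 0 independent of γ such that for all x ≠ y with |x−y| ≤ γ^{−1/2}, G^{(γ)}(x,y) ≤ C + C·log(γ^{−1/2}/|x−y|). -/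
/-- The Green's function on `ℤ²`: `G^{(γ)}(x,y) = Σ_{n≥0} (4/(4+γ))^n p_n(x,y)`. -/
noncomputable def greenSum2 (γ : ℝ) (x y : Site 2) : ℝ :=
  ∑' n : ℕ, (4 / (4 + γ)) ^ n * srwP 2 n x y

def pathCount : ℕ → ℤ → ℕ
  | 0, a => if a = 0 then 1 else 0
  | n+1, a => pathCount n (a+1) + pathCount n (a-1)

lemma pathCount_neg (n : ℕ) : ∀ a : ℤ, pathCount n (-a) = pathCount n a := by
  induction n with
  | zero => intro a; simp [pathCount, neg_eq_zero]
  | succ n ih =>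
    intro a
    show pathCount n (-a+1) + pathCount n (-a-1) = pathCount n (a+1) + pathCount n (a-1)
    rw [show -a + 1 = -(a-1) by ring, show -a - 1 = -(a+1) by ring, ih, ih]
    omega

lemma pathCount_eq (n : ℕ) : ∀ a : ℤ,
    pathCount n a = if (n + a.natAbs) % 2 = 0 then n.choose ((n + a.natAbs)/2) else 0 := by
  induction n with
  | zero =>
    intro a
    by_cases h : a = 0
    · simp [pathCount, h]
    · have h1 : a.natAbs ≠ 0 := by omega
      simp only [pathCount, if_neg h, Nat.zero_add]
      by_cases h2 : a.natAbs % 2 = 0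
      · rw [if_pos h2, Nat.choose_eq_zero_of_lt (by omega)]
      · rw [if_neg h2]
  | succ n ih =>
    have key : ∀ a : ℤ, 0 ≤ a →
        pathCount (n+1) a = if ((n+1) + a.natAbs) % 2 = 0 then (n+1).choose (((n+1) + a.natAbs)/2) else 0 := by
      intro a ha
      show pathCount n (a+1) + pathCount n (a-1) = _
      rw [ih, ih]
      rcases eq_or_lt_of_le ha with h0 | hpos
      · -- a = 0
        have : a = 0 := h0.symm
        subst this
        simp only [Int.natAbs_one, Int.natAbs_zero, Int.add_zero, Nat.add_zero]
        norm_num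
        by_cases hp : (n + 1) % 2 = 0
        · simp only [if_pos hp]
          have h1 : (n+1)/2 ≥ 1 := by omega
          obtain ⟨k, hk⟩ : ∃ k, (n+1)/2 = k + 1 := ⟨(n+1)/2 - 1, by omega⟩
          rw [hk, Nat.choose_succ_succ, Nat.succ_eq_add_one]
          have hsymm : n.choose k = n.choose (k+1) := by
            have h2 : n - (k+1) = k := by omega
            have h3 := Nat.choose_symm (show k+1 ≤ n by omega)
            rw [h2] at h3; exact h3
          omega
        · simp only [if_neg hp]
      · -- a ≥ 1
        have hm : a.natAbs ≥ 1 := by omega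
        have h1 : (a+1).natAbs = a.natAbs + 1 := by omega
        have h2 : (a-1).natAbs = a.natAbs - 1 := by omega
        rw [h1, h2]
        set m := a.natAbs with hm'
        by_cases hp : (n + 1 + m) % 2 = 0
        · have hp1 : (n + (m+1)) % 2 = 0 := by omega
          have hp2 : (n + (m-1)) % 2 = 0 := by omega
          rw [if_pos hp1, if_pos hp2, if_pos hp]
          have hk : (n + (m+1))/2 = (n + 1 + m)/2 := by omega
          have hk2 : (n + (m-1))/2 = (n + 1 + m)/2 - 1 := by omega
          obtain ⟨k, hkk⟩ : ∃ k, (n + 1 + m)/2 = k + 1 := ⟨(n+1+m)/2 - 1, by omega⟩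
          rw [hk, hk2, hkk]
          simp only [Nat.add_sub_cancel]
          rw [Nat.choose_succ_succ, Nat.succ_eq_add_one]
          omega
        · have hp1 : ¬ (n + (m+1)) % 2 = 0 := by omega
          have hp2 : ¬ (n + (m-1)) % 2 = 0 := by omega
          rw [if_neg hp1, if_neg hp2, if_neg hp]
    intro a
    rcases le_or_gt 0 a with ha | ha
    · exact key a ha
    · rw [← pathCount_neg, key (-a) (by omega)]
      simp

lemma cb_sq_bound : ∀ m : ℕ, (Nat.centralBinom m)^2 * (m+1) ≤ 16^m := by
  intro m
  induction m with
  | zero => simp [Nat.centralBinom]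
  | succ m ih =>
    have key := Nat.succ_mul_centralBinom_succ m
    have h1 : (m+1)^2 * ((Nat.centralBinom (m+1))^2 * (m+2)) =
        (4*(2*m+1)^2*(m+2)) * (Nat.centralBinom m)^2 := by
      have : ((m+1) * Nat.centralBinom (m+1))^2 * (m+2) =
          (2*(2*m+1)*Nat.centralBinom m)^2 * (m+2) := by rw [key]
      nlinarith [this]
    have h2 : (4*(2*m+1)^2*(m+2)) ≤ 16*(m+1)^3 := by nlinarith
    have h3 : (m+1)^2 * ((Nat.centralBinom (m+1))^2 * (m+2)) ≤ 16*(m+1)^3 * (Nat.centralBinom m)^2 := by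
      rw [h1]; exact Nat.mul_le_mul_right _ h2
    have h4 : 16*(m+1)^3 * (Nat.centralBinom m)^2 = 16*(m+1) * ((Nat.centralBinom m)^2 * (m+1)^2) := by ring
    have h5 : (Nat.centralBinom m)^2 * (m+1)^2 ≤ 16^m * (m+1) := by
      have : (Nat.centralBinom m)^2 * (m+1)^2 = ((Nat.centralBinom m)^2 * (m+1)) * (m+1) := by ring
      rw [this]; exact Nat.mul_le_mul_right _ ih
    have h6 : (m+1)^2 * ((Nat.centralBinom (m+1))^2 * (m+2)) ≤ 16*(m+1) * (16^m * (m+1)) := by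
      calc (m+1)^2 * ((Nat.centralBinom (m+1))^2 * (m+2)) ≤ 16*(m+1)^3 * (Nat.centralBinom m)^2 := h3
        _ = 16*(m+1) * ((Nat.centralBinom m)^2 * (m+1)^2) := h4
        _ ≤ 16*(m+1) * (16^m * (m+1)) := Nat.mul_le_mul_left _ h5
    have h7 : 16*(m+1) * (16^m * (m+1)) = (m+1)^2 * 16^(m+1) := by ring
    rw [h7] at h6
    exact Nat.le_of_mul_le_mul_left h6 (by positivity)

lemma middle_sq_bound (n : ℕ) : (n.choose (n/2))^2 * (n+1) ≤ 2 * 4^n := by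
  rcases Nat.even_or_odd n with ⟨m, hm⟩ | ⟨m, hm⟩
  · subst hm
    have h0 : (m+m)/2 = m := by omega
    rw [h0]
    have h1 : (m+m).choose m = Nat.centralBinom m := by
      rw [Nat.centralBinom]; congr 1; omega
    rw [h1]
    have h2 : 4^(m+m) = 16^m := by
      rw [show m+m = 2*m by omega, pow_mul]; norm_num
    rw [h2]
    calc (Nat.centralBinom m)^2 * (m+m+1) ≤ (Nat.centralBinom m)^2 * ((m+1)*2) :=
          Nat.mul_le_mul_left _ (by omega)
      _ = ((Nat.centralBinom m)^2 * (m+1)) * 2 := by ring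
      _ ≤ 16^m * 2 := Nat.mul_le_mul_right _ (cb_sq_bound m)
      _ = 2 * 16^m := by ring
  · subst hm
    have h0 : (2*m+1)/2 = m := by omega
    rw [h0]
    set c := (2*m+1).choose m with hc
    have hcb : Nat.centralBinom (m+1) = 2 * c := by
      rw [Nat.centralBinom, show 2*(m+1) = (2*m+1)+1 by omega]
      rw [Nat.choose_succ_succ']
      have hsymm := Nat.choose_symm (show m+1 ≤ 2*m+1 by omega)
      have : 2*m+1 - (m+1) = m := by omega
      rw [this] at hsymm
      omega
    have hkey := cb_sq_bound (m+1)
    rw [hcb] at hkey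
    -- (2c)^2 * (m+2) ≤ 16^(m+1)
    have h2 : 4 * (c^2 * (2*m+1+1)) ≤ 4 * (2 * 4^(2*m+1)) := by
      calc 4 * (c^2 * (2*m+1+1)) = (2*c)^2 * (2*(m+1)) := by ring
        _ ≤ (2*c)^2 * (2*(m+2)) := Nat.mul_le_mul_left _ (by omega)
        _ = ((2*c)^2 * (m+2)) * 2 := by ring
        _ ≤ 16^(m+1) * 2 := Nat.mul_le_mul_right _ hkey
        _ = 4 * (2 * 4^(2*m+1)) := by
            rw [show (16:ℕ)^(m+1) = 16 * 16^m by ring,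
              show (4:ℕ)^(2*m+1) = 4 * 4^(2*m) by ring,
              show (4:ℕ)^(2*m) = 16^m by rw [pow_mul]; norm_num]
            ring
    exact Nat.le_of_mul_le_mul_left h2 (by norm_num)

noncomputable def q1 (n : ℕ) (a : ℤ) : ℝ := (pathCount n a : ℝ) / 2^n

lemma q1_nonneg (n : ℕ) (a : ℤ) : 0 ≤ q1 n a := by unfold q1; positivity

/-- the middle bound -/
noncomputable def midb (n : ℕ) : ℝ := (n.choose (n/2) : ℝ) / 2^n

lemma midb_nonneg (n : ℕ) : 0 ≤ midb n := by unfold midb; positivity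

lemma q1_le_midb (n : ℕ) (a : ℤ) : q1 n a ≤ midb n := by
  have h : (pathCount n a : ℝ) ≤ (n.choose (n/2) : ℝ) := by
    have : pathCount n a ≤ n.choose (n/2) := by
      rw [pathCount_eq]; split
      exacts [Nat.choose_le_middle _ _, Nat.zero_le _]
    exact_mod_cast this
  unfold q1 midb
  gcongr

lemma midb_sq_le (n : ℕ) : midb n ^ 2 ≤ 2 / (n+1) := by
  rw [midb, div_pow, div_le_div_iff₀ (by positivity) (by positivity)]
  have h : ((n.choose (n/2))^2 * (n+1) : ℝ) ≤ 2 * 4^n := by exact_mod_cast middle_sq_bound n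
  have h2 : ((2:ℝ)^n)^2 = 4^n := by
    rw [← pow_mul, mul_comm, pow_mul]
    norm_num
  calc ((n.choose (n/2) : ℝ))^2 * (n+1) ≤ 2*4^n := h
    _ = 2 * ((2:ℝ)^n)^2 := by rw [h2]

lemma q1_succ (n : ℕ) (a : ℤ) : q1 (n+1) a = (q1 n (a+1) + q1 n (a-1))/2 := by
  show ((pathCount n (a+1) + pathCount n (a-1) : ℕ) : ℝ) / 2^(n+1) =
    ((pathCount n (a+1) : ℝ)/2^n + (pathCount n (a-1) : ℝ)/2^n)/2
  push_cast
  rw [pow_succ]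
  field_simp


lemma srwP_eq_prod (n : ℕ) : ∀ x y : Site 2,
    srwP 2 n x y = q1 n ((x 0 + x 1) - (y 0 + y 1)) * q1 n ((x 0 - x 1) - (y 0 - y 1)) := by
  induction n with
  | zero =>
    intro x y
    show (if x = y then (1:ℝ) else 0) = _
    by_cases h : x = y
    · subst h
      simp [q1, pathCount]
    · rw [if_neg h]
      have : ¬((x 0 + x 1) - (y 0 + y 1) = 0 ∧ (x 0 - x 1) - (y 0 - y 1) = 0) := by
        intro ⟨h1, h2⟩
        apply h
        funext j
        fin_cases j
        · show x 0 = y 0; omega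
        · show x 1 = y 1; omega
      rcases not_and_or.mp this with h1 | h1
      · have : q1 0 ((x 0 + x 1) - (y 0 + y 1)) = 0 := by
          simp [q1, pathCount, if_neg h1]
        rw [this, zero_mul]
      · have : q1 0 ((x 0 - x 1) - (y 0 - y 1)) = 0 := by
          simp [q1, pathCount, if_neg h1]
        rw [this, mul_zero]
  | succ n ih =>
    intro x y
    show (1 / (2 * (2:ℕ)) : ℝ) * ∑ s : Fin 2 × Bool, srwP 2 n (x + step s.1 s.2) y = _
    rw [Fintype.sum_prod_type, Fin.sum_univ_two]
    rw [Fintype.sum_bool, Fintype.sum_bool]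
    rw [ih, ih, ih, ih]
    have c1 : (x + step (0:Fin 2) true) 0 = x 0 + 1 := by simp [step]
    have c2 : (x + step (0:Fin 2) true) 1 = x 1 := by simp [step]
    have c3 : (x + step (0:Fin 2) false) 0 = x 0 - 1 := by simp [step]; ring
    have c4 : (x + step (0:Fin 2) false) 1 = x 1 := by simp [step]
    have c5 : (x + step (1:Fin 2) true) 0 = x 0 := by simp [step]
    have c6 : (x + step (1:Fin 2) true) 1 = x 1 + 1 := by simp [step]
    have c7 : (x + step (1:Fin 2) false) 0 = x 0 := by simp [step]
    have c8 : (x + step (1:Fin 2) false) 1 = x 1 - 1 := by simp [step]; ring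
    rw [c1, c2, c3, c4, c5, c6, c7, c8]
    rw [show x 0 + 1 + x 1 - (y 0 + y 1) = (x 0 + x 1 - (y 0 + y 1)) + 1 from by ring]
    rw [show x 0 + 1 - x 1 - (y 0 - y 1) = (x 0 - x 1 - (y 0 - y 1)) + 1 from by ring]
    rw [show x 0 - 1 + x 1 - (y 0 + y 1) = (x 0 + x 1 - (y 0 + y 1)) - 1 from by ring]
    rw [show x 0 - 1 - x 1 - (y 0 - y 1) = (x 0 - x 1 - (y 0 - y 1)) - 1 from by ring]
    rw [show x 0 + (x 1 + 1) - (y 0 + y 1) = (x 0 + x 1 - (y 0 + y 1)) + 1 from by ring]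
    rw [show x 0 - (x 1 + 1) - (y 0 - y 1) = (x 0 - x 1 - (y 0 - y 1)) - 1 from by ring]
    rw [show x 0 + (x 1 - 1) - (y 0 + y 1) = (x 0 + x 1 - (y 0 + y 1)) - 1 from by ring]
    rw [show x 0 - (x 1 - 1) - (y 0 - y 1) = (x 0 - x 1 - (y 0 - y 1)) + 1 from by ring]
    rw [q1_succ, q1_succ]
    push_cast
    ring
lemma ratio_prod_bound : ∀ t k : ℕ, 1 ≤ t → t ≤ k →
    (∏ i ∈ Finset.range t, (((k:ℝ) - i) / ((k:ℝ) + i + 1))) * (t:ℝ)^2 ≤ 2*(k:ℝ) := by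
  intro t
  induction t using Nat.strong_induction_on with
  | _ t IH =>
    intro k ht htk
    have hfac : ∀ i ∈ Finset.range t, (0:ℝ) ≤ ((k:ℝ) - i) / ((k:ℝ) + i + 1) := by
      intro i hi
      have hi' : i < t := Finset.mem_range.mp hi
      have : (i:ℝ) ≤ (k:ℝ) := by exact_mod_cast le_trans (le_of_lt hi') htk
      apply div_nonneg (by linarith) (by positivity)
    have hfac1 : ∀ i ∈ Finset.range t, ((k:ℝ) - i) / ((k:ℝ) + i + 1) ≤ 1 := by
      intro i hi
      rw [div_le_one (by positivity)]
      linarith [Nat.cast_nonneg (α := ℝ) i]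
    have hQ0 : (0:ℝ) ≤ ∏ i ∈ Finset.range t, (((k:ℝ) - i) / ((k:ℝ) + i + 1)) :=
      Finset.prod_nonneg hfac
    have hQ1 : (∏ i ∈ Finset.range t, (((k:ℝ) - i) / ((k:ℝ) + i + 1))) ≤ 1 :=
      Finset.prod_le_one hfac hfac1
    by_cases hsmall : t^2 ≤ 2*k
    · calc (∏ i ∈ Finset.range t, (((k:ℝ) - i) / ((k:ℝ) + i + 1))) * (t:ℝ)^2
          ≤ 1 * (t:ℝ)^2 := by
            apply mul_le_mul_of_nonneg_right hQ1 (by positivity)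
        _ = (t:ℝ)^2 := by ring
        _ ≤ 2*(k:ℝ) := by exact_mod_cast hsmall
    · -- t^2 > 2k, so t ≥ 2
      obtain ⟨s, rfl⟩ : ∃ s, t = s + 1 := ⟨t - 1, by omega⟩
      have hsq : (s+1)^2 = s*s + 2*s + 1 := by ring
      have hs1 : 1 ≤ s := by
        by_contra hs
        have : s = 0 := by omega
        subst this
        omega
      have hks : k ≤ s*(s+1) := by
        have h2 : 2*k < (s+1)^2 := by omega
        rw [hsq] at h2
        have h3 : s*(s+1) = s*s + s := by ring
        omega
      have IHs := IH s (by omega) k hs1 (by omega)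
      have hQs0 : (0:ℝ) ≤ ∏ i ∈ Finset.range s, (((k:ℝ) - i) / ((k:ℝ) + i + 1)) :=
        Finset.prod_nonneg (fun i hi => hfac i (by simp at hi ⊢; omega))
      rw [Finset.prod_range_succ]
      have hstep : (((k:ℝ) - s) / ((k:ℝ) + s + 1)) * ((s:ℝ)+1)^2 ≤ (s:ℝ)^2 := by
        rw [div_mul_eq_mul_div, div_le_iff₀ (by positivity)]
        have hks' : (k:ℝ) ≤ s*(s+1) := by exact_mod_cast hks
        nlinarith [hks']
      have hcast : ((s+1 : ℕ):ℝ) = (s:ℝ) + 1 := by push_cast; ring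
      calc (∏ i ∈ Finset.range s, (((k:ℝ) - i) / ((k:ℝ) + i + 1))) *
              (((k:ℝ) - s) / ((k:ℝ) + s + 1)) * ((s+1 : ℕ):ℝ)^2
          = (∏ i ∈ Finset.range s, (((k:ℝ) - i) / ((k:ℝ) + i + 1))) *
              ((((k:ℝ) - s) / ((k:ℝ) + s + 1)) * ((s:ℝ)+1)^2) := by rw [hcast]; ring
        _ ≤ (∏ i ∈ Finset.range s, (((k:ℝ) - i) / ((k:ℝ) + i + 1))) * (s:ℝ)^2 := by
            apply mul_le_mul_of_nonneg_left hstep hQs0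
        _ ≤ 2*(k:ℝ) := IHs

lemma choose_shift_prod (n k : ℕ) : ∀ t : ℕ,
    (n.choose (k+t)) * ∏ i ∈ Finset.range t, (k+i+1) =
      n.choose k * ∏ i ∈ Finset.range t, (n - (k+i)) := by
  intro t
  induction t with
  | zero => simp
  | succ t ih =>
    rw [Finset.prod_range_succ, Finset.prod_range_succ]
    have h1 : n.choose (k+t+1) * (k+t+1) = n.choose (k+t) * (n - (k+t)) :=
      Nat.choose_succ_right_eq n (k+t)
    calc n.choose (k+(t+1)) * ((∏ i ∈ Finset.range t, (k+i+1)) * (k+t+1))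
        = (n.choose (k+t+1) * (k+t+1)) * ∏ i ∈ Finset.range t, (k+i+1) := by
          rw [show k+(t+1) = k+t+1 by omega]; ring
      _ = (n.choose (k+t) * ∏ i ∈ Finset.range t, (k+i+1)) * (n - (k+t)) := by rw [h1]; ring
      _ = (n.choose k * ∏ i ∈ Finset.range t, (n - (k+i))) * (n - (k+t)) := by rw [ih]
      _ = n.choose k * ((∏ i ∈ Finset.range t, (n - (k+i))) * (n - (k+t))) := by ring

lemma choose_decay (n k t : ℕ) (hn : n ≤ 2*k) (ht : 1 ≤ t) (htk : t ≤ k) :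
    (n.choose (k+t) : ℝ) * (t:ℝ)^2 ≤ (n.choose k : ℝ) * (2*(k:ℝ)) := by
  have hpos : (0:ℝ) < ∏ i ∈ Finset.range t, ((k:ℝ)+i+1) := by
    apply Finset.prod_pos; intro i _; positivity
  have hident : (n.choose (k+t) : ℝ) * ∏ i ∈ Finset.range t, ((k:ℝ)+(i:ℝ)+1) =
      (n.choose k : ℝ) * ∏ i ∈ Finset.range t, ((n - (k+i) : ℕ) : ℝ) := by
    exact_mod_cast choose_shift_prod n k t
  have hcomp : (∏ i ∈ Finset.range t, ((n - (k+i) : ℕ) : ℝ)) ≤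
      ∏ i ∈ Finset.range t, ((k:ℝ) - (i:ℝ)) := by
    apply Finset.prod_le_prod
    · intro i _; positivity
    · intro i hi
      have hi' : i < t := Finset.mem_range.mp hi
      have h1 : (n - (k+i)) ≤ k - i := by omega
      have h2 : ((k - i : ℕ) : ℝ) = (k:ℝ) - (i:ℝ) := by
        have : i ≤ k := by omega
        push_cast [this]
        ring
      rw [← h2]
      exact_mod_cast h1
  -- combine
  have hprod_eq : (∏ i ∈ Finset.range t, (((k:ℝ) - i) / ((k:ℝ) + i + 1))) *
      ∏ i ∈ Finset.range t, ((k:ℝ)+(i:ℝ)+1) = ∏ i ∈ Finset.range t, ((k:ℝ) - (i:ℝ)) := by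
    rw [← Finset.prod_mul_distrib]
    apply Finset.prod_congr rfl
    intro i _
    field_simp
  have hchoose_le : (n.choose (k+t) : ℝ) ≤
      (n.choose k : ℝ) * ∏ i ∈ Finset.range t, (((k:ℝ) - i) / ((k:ℝ) + i + 1)) := by
    rw [← mul_le_mul_iff_of_pos_right hpos, hident, mul_assoc, hprod_eq]
    apply mul_le_mul_of_nonneg_left hcomp (by positivity)
  calc (n.choose (k+t) : ℝ) * (t:ℝ)^2
      ≤ ((n.choose k : ℝ) * ∏ i ∈ Finset.range t, (((k:ℝ) - i) / ((k:ℝ) + i + 1))) * (t:ℝ)^2 := by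
        apply mul_le_mul_of_nonneg_right hchoose_le (by positivity)
    _ = (n.choose k : ℝ) * ((∏ i ∈ Finset.range t, (((k:ℝ) - i) / ((k:ℝ) + i + 1))) * (t:ℝ)^2) := by ring
    _ ≤ (n.choose k : ℝ) * (2*(k:ℝ)) := by
        apply mul_le_mul_of_nonneg_left (ratio_prod_bound t k ht htk) (by positivity)

lemma choose_middle_eq (n : ℕ) : n.choose ((n+1)/2) = n.choose (n/2) := by
  rcases Nat.even_or_odd n with ⟨m, hm⟩ | ⟨m, hm⟩
  · congr 1; omega
  · have h := Nat.choose_symm (show (n+1)/2 ≤ n by omega)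
    have h2 : n - (n+1)/2 = n/2 := by omega
    rw [h2] at h
    exact h.symm

lemma q1_decay (n : ℕ) (u : ℤ) (hm : 2 ≤ u.natAbs) :
    q1 n u * ((u.natAbs : ℝ))^2 ≤ midb n * (18*(n:ℝ)) := by
  rw [q1, pathCount_eq]
  set m := u.natAbs with hmdef
  by_cases hp : (n + m) % 2 = 0
  · rw [if_pos hp]
    by_cases hmn : m ≤ n
    · -- main case
      set k' := (n+1)/2 with hk'
      set t := (n + m)/2 - k' with htdef
      have h1 : k' + t = (n+m)/2 := by omega
      have h2 : 1 ≤ t := by omega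
      have h3 : t ≤ k' := by omega
      have h4 : n ≤ 2*k' := by omega
      have h5 : m ≤ 3*t := by omega
      have h6 : 1 ≤ n := by omega
      have hd := choose_decay n k' t h4 h2 h3
      rw [h1] at hd
      have hm2 : ((m:ℝ))^2 ≤ 9*(t:ℝ)^2 := by
        have : (m:ℝ) ≤ 3*(t:ℝ) := by exact_mod_cast h5
        nlinarith [Nat.cast_nonneg (α := ℝ) m]
      have hk'n : 2*(k':ℝ) ≤ 2*(n:ℝ) := by
        have : k' ≤ n := by omega
        have := (Nat.cast_le (α := ℝ)).mpr this
        linarith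
      have hcm : (n.choose k' : ℝ) = (n.choose (n/2) : ℝ) := by
        exact_mod_cast congrArg (fun z : ℕ => (z:ℝ)) (choose_middle_eq n)
      calc (n.choose ((n+m)/2) : ℝ)/2^n * (m:ℝ)^2
          ≤ (n.choose ((n+m)/2) : ℝ)/2^n * (9*(t:ℝ)^2) := by
            apply mul_le_mul_of_nonneg_left hm2 (by positivity)
        _ = ((n.choose ((n+m)/2) : ℝ) * (t:ℝ)^2) * 9 / 2^n := by ring
        _ ≤ ((n.choose k' : ℝ) * (2*(k':ℝ))) * 9 / 2^n := by gcongr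
        _ ≤ ((n.choose (n/2) : ℝ) * (2*(n:ℝ))) * 9 / 2^n := by rw [hcm]; gcongr
        _ = ((n.choose (n/2) : ℝ)/2^n) * (18*(n:ℝ)) := by ring
    · -- m > n : choose = 0
      have : (n+m)/2 ≥ n + 1 := by omega
      rw [Nat.choose_eq_zero_of_lt (by omega)]
      simp only [Nat.cast_zero, zero_div, zero_mul]
      exact mul_nonneg (midb_nonneg n) (by positivity)
  · rw [if_neg hp]
    simp only [Nat.cast_zero, zero_div, zero_mul]
    exact mul_nonneg (midb_nonneg n) (by positivity)

lemma dist1_eq_max (x y : Site 2) :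
    dist1 x y = max ((x 0 + x 1 - (y 0 + y 1)).natAbs) ((x 0 - x 1 - (y 0 - y 1)).natAbs) := by
  rw [dist1, Fin.sum_univ_two]
  omega

lemma srwP_nonneg (n : ℕ) (x y : Site 2) : 0 ≤ srwP 2 n x y := by
  rw [srwP_eq_prod]
  exact mul_nonneg (q1_nonneg _ _) (q1_nonneg _ _)

lemma srwP_le_two_div (n : ℕ) (x y : Site 2) : srwP 2 n x y ≤ 2/((n:ℝ)+1) := by
  rw [srwP_eq_prod]
  calc q1 n _ * q1 n _ ≤ midb n * midb n := by
        apply mul_le_mul (q1_le_midb _ _) (q1_le_midb _ _) (q1_nonneg _ _) (midb_nonneg _)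
    _ = midb n ^ 2 := by ring
    _ ≤ 2/((n:ℝ)+1) := midb_sq_le n

lemma srwP_le_r (n : ℕ) (x y : Site 2) (hr : 1 ≤ dist1 x y) :
    srwP 2 n x y ≤ 36/((dist1 x y : ℝ))^2 := by
  set r := dist1 x y with hrdef
  by_cases hr1 : r = 1
  · rw [hr1]
    calc srwP 2 n x y ≤ 2/((n:ℝ)+1) := srwP_le_two_div n x y
      _ ≤ 2/1 := by
          apply div_le_div_of_nonneg_left (by norm_num) (by norm_num)
          have : (0:ℝ) ≤ (n:ℝ) := Nat.cast_nonneg n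
          linarith
      _ ≤ 36/((1:ℕ):ℝ)^2 := by norm_num
  · have hr2 : 2 ≤ r := by omega
    have hmax := dist1_eq_max x y
    set u := x 0 + x 1 - (y 0 + y 1) with hu
    set v := x 0 - x 1 - (y 0 - y 1) with hv
    rw [srwP_eq_prod]
    have hrpos : (0:ℝ) < ((r:ℝ))^2 := by positivity
    have key : ∀ a b : ℤ, a.natAbs = r → q1 n a * q1 n b ≤ 36/((r:ℝ))^2 := by
      intro a b ha
      have hd := q1_decay n a (by omega)
      rw [ha] at hd
      have hq1 : q1 n a ≤ midb n * (18*(n:ℝ)) / ((r:ℝ))^2 := by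
        rw [le_div_iff₀ hrpos]
        exact hd
      calc q1 n a * q1 n b ≤ (midb n * (18*(n:ℝ)) / ((r:ℝ))^2) * midb n := by
            apply mul_le_mul hq1 (q1_le_midb _ _) (q1_nonneg _ _)
            have := midb_nonneg n
            positivity
        _ = (midb n ^2) * (18*(n:ℝ)) / ((r:ℝ))^2 := by ring
        _ ≤ (2/((n:ℝ)+1)) * (18*(n:ℝ)) / ((r:ℝ))^2 := by
            gcongr
            exact midb_sq_le n
        _ ≤ 36/((r:ℝ))^2 := by
            gcongr
            rw [div_mul_eq_mul_div, div_le_iff₀ (by positivity)]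
            have : (0:ℝ) ≤ (n:ℝ) := Nat.cast_nonneg n
            nlinarith
    rcases max_cases (u.natAbs) (v.natAbs) with ⟨h1, _⟩ | ⟨h1, _⟩
    · exact key u v (by omega)
    · rw [mul_comm]
      exact key v u (by omega)

lemma inv_le_log_succ (N : ℕ) (h : 1 ≤ N) :
    1/((N:ℝ)+1) ≤ Real.log ((N:ℝ)+1) - Real.log (N:ℝ) := by
  have hN : (0:ℝ) < (N:ℝ) := by exact_mod_cast h
  have hlog := Real.log_le_sub_one_of_pos (show (0:ℝ) < (N:ℝ)/((N:ℝ)+1) by positivity)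
  rw [Real.log_div (by positivity) (by positivity)] at hlog
  have harith : (N:ℝ)/((N:ℝ)+1) - 1 = -(1/((N:ℝ)+1)) := by
    field_simp
    ring
  rw [harith] at hlog
  linarith

lemma head_log_bound (R : ℕ) (hR : 1 ≤ R) : ∀ N : ℕ,
    ∑ n ∈ Finset.range N, (if n < R then (0:ℝ) else 2/((n:ℝ)+1)) ≤
      2*Real.log ((max R N : ℕ) : ℝ) - 2*Real.log (R:ℝ) := by
  intro N
  induction N with
  | zero =>
    simp [Nat.max_zero, le_refl]
  | succ N ih =>
    rw [Finset.sum_range_succ]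
    by_cases hNR : N < R
    · rw [if_pos hNR]
      have h1 : max R (N+1) = R := by omega
      have h2 : max R N = R := by omega
      rw [h1]; rw [h2] at ih
      linarith
    · push_neg at hNR
      rw [if_neg (by omega)]
      have h1 : max R (N+1) = N+1 := by omega
      have h2 : max R N = N := by omega
      rw [h1]; rw [h2] at ih
      have hN1 : 1 ≤ N := by omega
      have hlog := inv_le_log_succ N hN1
      have hcast : ((N+1 : ℕ):ℝ) = (N:ℝ)+1 := by push_cast; ring
      rw [hcast]
      have hlog2 : 2/((N:ℝ)+1) ≤ 2*Real.log ((N:ℝ)+1) - 2*Real.log (N:ℝ) := by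
        have e : 2/((N:ℝ)+1) = 2*(1/((N:ℝ)+1)) := by ring
        rw [e]
        linarith
      linarith

lemma geom_tail_bound (c lam : ℝ) (hc : 0 ≤ c) (h0 : 0 ≤ lam) (h1 : lam < 1) :
    ∑' i : ℕ, c * lam^i = c / (1 - lam) := by
  rw [tsum_mul_left, tsum_geometric_of_lt_one h0 h1]
  rw [div_eq_mul_inv]

lemma dist1_pos {x y : Site 2} (h : x ≠ y) : 1 ≤ dist1 x y := by
  by_contra hc
  have h0 : dist1 x y = 0 := by omega
  rw [dist1, Fin.sum_univ_two] at h0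
  apply h
  funext j
  fin_cases j
  · show x 0 = y 0; omega
  · show x 1 = y 1; omega


set_option maxHeartbeats 1600000 in
/-- Near-diagonal logarithmic bound on the massive Green's function in `d = 2`:
for `|x-y| ≤ γ^{-1/2}`, `G^{(γ)}(x,y) ≤ C + C log(γ^{-1/2}/|x-y|)`, with `C`
independent of `γ ∈ (0,1)`. -/
theorem green_upper_near_d2 :
    ∃ C : ℝ, 0 < C ∧
      ∀ γ : ℝ, 0 < γ → γ < 1 → ∀ x y : Site 2, x ≠ y →
        (dist1 x y : ℝ) ≤ γ ^ (-(1 : ℝ) / 2) →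
          greenSum2 γ x y ≤
            C + C * Real.log (γ ^ (-(1 : ℝ) / 2) / (dist1 x y : ℝ)) := by
  refine ⟨48, by norm_num, ?_⟩
  intro γ hγ0 hγ1 x y hxy hdist
  set s : ℝ := γ ^ (-(1 : ℝ) / 2) with hs
  set r : ℕ := dist1 x y with hrdef
  have hr1 : 1 ≤ r := dist1_pos hxy
  have hr1R : (1:ℝ) ≤ (r:ℝ) := by exact_mod_cast hr1
  have hs1 : 1 < s := by
    rw [hs, Real.one_lt_rpow_iff_of_pos hγ0]
    right
    constructor
    · exact hγ1
    · norm_num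
  have hssq : s^2 = γ⁻¹ := by
    rw [hs, ← Real.rpow_natCast (γ ^ (-(1:ℝ)/2)) 2, ← Real.rpow_mul hγ0.le]
    norm_num
    exact Real.rpow_neg_one γ
  have hrs : (r:ℝ) ≤ s := hdist
  set lam : ℝ := 4/(4+γ) with hlam
  have hlam0 : 0 ≤ lam := by positivity
  have hlam1 : lam < 1 := by
    rw [hlam, div_lt_one (by linarith)]
    linarith
  set f : ℕ → ℝ := fun n => lam^n * srwP 2 n x y with hf
  have hf_nonneg : ∀ n, 0 ≤ f n := fun n => mul_nonneg (by positivity) (srwP_nonneg n x y)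
  have hf_le_geom : ∀ n, f n ≤ 2 * lam^n := by
    intro n
    rw [hf]
    calc lam^n * srwP 2 n x y ≤ lam^n * 2 := by
          apply mul_le_mul_of_nonneg_left _ (by positivity)
          calc srwP 2 n x y ≤ 2/((n:ℝ)+1) := srwP_le_two_div n x y
            _ ≤ 2/1 := by
                apply div_le_div_of_nonneg_left (by norm_num) (by norm_num)
                have : (0:ℝ) ≤ (n:ℝ) := Nat.cast_nonneg n
                linarith
            _ = 2 := by norm_num
      _ = 2 * lam^n := by ring
  have hsummable : Summable f :=
    Summable.of_nonneg_of_le hf_nonneg hf_le_geom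
      ((summable_geometric_of_lt_one hlam0 hlam1).mul_left 2)
  set N : ℕ := ⌈γ⁻¹⌉₊ with hN
  set R : ℕ := r^2 with hR
  have hR1 : 1 ≤ R := by rw [hR]; exact Nat.one_le_pow 2 r (by omega)
  have hsplit := Summable.sum_add_tsum_nat_add N hsummable
  have hgreen : greenSum2 γ x y = (∑ n ∈ Finset.range N, f n) + ∑' i, f (i + N) := by
    calc greenSum2 γ x y = ∑' n, f n := rfl
      _ = _ := hsplit.symm
  -- head bound
  have hhead : (∑ n ∈ Finset.range N, f n) ≤
      36 + (2*Real.log ((max R N : ℕ):ℝ) - 2*Real.log (R:ℝ)) := by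
    have hterm : ∀ n ∈ Finset.range N, f n ≤
        (if n < R then 36/((r:ℝ))^2 else 0) + (if n < R then 0 else 2/((n:ℝ)+1)) := by
      intro n _
      have hlampow : lam^n ≤ 1 := pow_le_one₀ hlam0 hlam1.le
      by_cases hn : n < R
      · rw [if_pos hn, if_pos hn, add_zero]
        calc f n ≤ 1 * srwP 2 n x y := by
              apply mul_le_mul_of_nonneg_right hlampow (srwP_nonneg n x y)
          _ = srwP 2 n x y := by ring
          _ ≤ 36/((r:ℝ))^2 := srwP_le_r n x y hr1
      · rw [if_neg hn, if_neg hn, zero_add]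
        calc f n ≤ 1 * srwP 2 n x y := by
              apply mul_le_mul_of_nonneg_right hlampow (srwP_nonneg n x y)
          _ = srwP 2 n x y := by ring
          _ ≤ 2/((n:ℝ)+1) := srwP_le_two_div n x y
    calc (∑ n ∈ Finset.range N, f n) ≤
        ∑ n ∈ Finset.range N, ((if n < R then 36/((r:ℝ))^2 else 0) + (if n < R then 0 else 2/((n:ℝ)+1))) :=
          Finset.sum_le_sum hterm
      _ = (∑ n ∈ Finset.range N, (if n < R then 36/((r:ℝ))^2 else 0)) +
          ∑ n ∈ Finset.range N, (if n < R then 0 else 2/((n:ℝ)+1)) := Finset.sum_add_distrib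
      _ ≤ 36 + (2*Real.log ((max R N : ℕ):ℝ) - 2*Real.log (R:ℝ)) := by
          apply add_le_add
          · -- constant part
            have hsub : (Finset.range N).filter (fun n => n < R) ⊆ Finset.range R := by
              intro n hn
              simp only [Finset.mem_filter, Finset.mem_range] at hn ⊢
              exact hn.2
            rw [← Finset.sum_filter]
            calc ∑ n ∈ (Finset.range N).filter (fun n => n < R), 36/((r:ℝ))^2
                ≤ ∑ n ∈ Finset.range R, 36/((r:ℝ))^2 := by
                  apply Finset.sum_le_sum_of_subset_of_nonneg hsub
                  intro i _ _; positivity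
              _ = (R:ℝ) * (36/((r:ℝ))^2) := by
                  rw [Finset.sum_const, Finset.card_range, nsmul_eq_mul]
              _ = 36 := by
                  rw [hR]
                  push_cast
                  field_simp
          · exact head_log_bound R hR1 N
  -- tail bound
  have hNγ : (1:ℝ) ≤ ((N:ℝ)+1) * γ := by
    have h1 : γ⁻¹ ≤ (N:ℝ) := Nat.le_ceil γ⁻¹
    have h2 : γ⁻¹ * γ = 1 := inv_mul_cancel₀ (ne_of_gt hγ0)
    nlinarith
  have htail : (∑' i, f (i + N)) ≤ 10 := by
    have hterm : ∀ i : ℕ, f (i + N) ≤ (2/((N:ℝ)+1)) * lam^i := by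
      intro i
      rw [hf]
      have h1 : srwP 2 (i+N) x y ≤ 2/((N:ℝ)+1) := by
        calc srwP 2 (i+N) x y ≤ 2/(((i+N:ℕ):ℝ)+1) := srwP_le_two_div (i+N) x y
          _ ≤ 2/((N:ℝ)+1) := by
              apply div_le_div_of_nonneg_left (by norm_num) (by positivity)
              push_cast
              have : (0:ℝ) ≤ (i:ℝ) := Nat.cast_nonneg i
              linarith
      calc lam^(i+N) * srwP 2 (i+N) x y ≤ lam^(i+N) * (2/((N:ℝ)+1)) := by
            apply mul_le_mul_of_nonneg_left h1 (by positivity)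
        _ = (lam^i * lam^N) * (2/((N:ℝ)+1)) := by rw [pow_add]
        _ ≤ (lam^i * 1) * (2/((N:ℝ)+1)) := by
            apply mul_le_mul_of_nonneg_right _ (by positivity)
            apply mul_le_mul_of_nonneg_left (pow_le_one₀ hlam0 hlam1.le) (by positivity)
        _ = (2/((N:ℝ)+1)) * lam^i := by ring
    have hsum2 : Summable (fun i => (2/((N:ℝ)+1)) * lam^i) :=
      (summable_geometric_of_lt_one hlam0 hlam1).mul_left _
    calc (∑' i, f (i + N)) ≤ ∑' i, (2/((N:ℝ)+1)) * lam^i := by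
          apply Summable.tsum_le_tsum hterm ((summable_nat_add_iff N).mpr hsummable) hsum2
      _ = (2/((N:ℝ)+1)) / (1 - lam) := geom_tail_bound _ _ (by positivity) hlam0 hlam1
      _ ≤ 10 := by
          have h1mlam : 1 - lam = γ/(4+γ) := by
            rw [hlam]
            field_simp
            ring
          have hNpos : (0:ℝ) < (N:ℝ)+1 := by positivity
          have heq : (2/((N:ℝ)+1)) / (γ/(4+γ)) = 2*(4+γ)/(((N:ℝ)+1)*γ) := by
            field_simp
          rw [h1mlam, heq, div_le_iff₀ (by positivity)]
          nlinarith [hNγ]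
  -- combine
  have hmaxpos : (0:ℝ) < ((max R N : ℕ):ℝ) := by
    have : 1 ≤ max R N := le_trans hR1 (le_max_left R N)
    exact_mod_cast lt_of_lt_of_le one_pos (by exact_mod_cast this)
  have hs0 : (0:ℝ) < s := lt_trans one_pos hs1
  have hssq1 : (1:ℝ) ≤ s^2 := by nlinarith
  have hmaxle : ((max R N : ℕ):ℝ) ≤ 2*s^2 := by
    rw [Nat.cast_max]
    apply max_le
    · have : (R:ℝ) = (r:ℝ)^2 := by rw [hR]; push_cast; ring
      rw [this]
      nlinarith [hrs, hr1R, hs1]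
    · have h1 : (N:ℝ) < γ⁻¹ + 1 := Nat.ceil_lt_add_one (by positivity)
      rw [← hssq] at h1
      linarith
  have hlogmax : Real.log ((max R N : ℕ):ℝ) ≤ Real.log 2 + 2*Real.log s := by
    calc Real.log ((max R N : ℕ):ℝ) ≤ Real.log (2*s^2) := Real.log_le_log hmaxpos hmaxle
      _ = Real.log 2 + 2*Real.log s := by
          rw [Real.log_mul (by norm_num) (by positivity), Real.log_pow]
          push_cast
          ring
  have hlogR : Real.log ((R:ℕ):ℝ) = 2*Real.log ((r:ℕ):ℝ) := by
    have : ((R:ℕ):ℝ) = ((r:ℕ):ℝ)^2 := by rw [hR]; push_cast; ring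
    rw [this, Real.log_pow]
    push_cast
    ring
  have hlogsr : Real.log (s/(r:ℝ)) = Real.log s - Real.log (r:ℝ) :=
    Real.log_div (ne_of_gt hs0) (by positivity)
  have hlogs0 : 0 ≤ Real.log s := Real.log_nonneg hs1.le
  have hlogr0 : 0 ≤ Real.log ((r:ℕ):ℝ) := Real.log_nonneg hr1R
  have hlogrs : Real.log ((r:ℕ):ℝ) ≤ Real.log s := Real.log_le_log (by positivity) hrs
  have hlog2 : Real.log 2 ≤ 1 := by
    have := Real.log_le_sub_one_of_pos (show (0:ℝ) < 2 by norm_num)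
    linarith
  rw [hgreen, hlogsr]
  linarith
end

section
/- In the abelian avalanche model on a finite Λ ⊂ Z^d, the addition operators commute: for all x, y ∈ Λ and all stable configurations η ∈ Ω^{(γ)}_Λ, a^{(γ)}_{Λ,x}(a^{(γ)}_{Λ,y} η) = a^{(γ)}_{Λ,y}(a^{(γ)}_{Λ,x} η), and both equal S^{(γ)}_Λ(η + δ_x + δ_y). -/
/-- Height configurations on `ℤ^d` (heights are reals). -/
abbrev Config (d : ℕ) := Site d → ℝ

/-- The toppling matrix `Δ^{(γ)}`: `2d+γ` on the diagonal, `-1` on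
nearest-neighbor pairs, `0` otherwise. -/
noncomputable def toppleMat (d : ℕ) (γ : ℝ) (x y : Site d) : ℝ :=
  if x = y then 2 * d + γ else if dist1 x y = 1 then -1 else 0

/-- Toppling site `x`: subtract the row `Δ^{(γ)}_{x,·}` from the configuration. -/
noncomputable def topple (d : ℕ) (γ : ℝ) (x : Site d) (η : Config d) : Config d :=
  fun y => η y - toppleMat d γ x y

/-- Apply a finite sequence of topplings. -/
noncomputable def applyList (d : ℕ) (γ : ℝ) : List (Site d) → Config d → Config d
  | [], η => η
  | x :: l, η => applyList d γ l (topple d γ x η)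

/-- A sequence of topplings, all at sites of `Λ`, is legal if each toppled site
is unstable (height `≥ 2d+γ`) at the moment it is toppled. -/
def legalList (d : ℕ) (γ : ℝ) (Λ : Finset (Site d)) : Config d → List (Site d) → Prop
  | _, [] => True
  | η, x :: l => x ∈ Λ ∧ 2 * d + γ ≤ η x ∧ legalList d γ Λ (topple d γ x η) l

/-- A `(Λ,γ)`-stabilizing sequence: a legal sequence of topplings in `Λ` whose
final configuration is stable (`< 2d+γ`) at every site of `Λ`. -/
def stabilizingList (d : ℕ) (γ : ℝ) (Λ : Finset (Site d)) (η : Config d)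
    (l : List (Site d)) : Prop :=
  legalList d γ Λ η l ∧ ∀ x ∈ Λ, applyList d γ l η x < 2 * d + γ

/-- The stabilization map `S^{(γ)}_Λ` (defined via a choice of stabilizing
sequence; by abelianness it does not depend on the choice). -/
noncomputable def stabilize (d : ℕ) (γ : ℝ) (Λ : Finset (Site d)) (η : Config d) :
    Config d :=
  open scoped Classical in
  if h : ∃ l, stabilizingList d γ Λ η l then applyList d γ h.choose η else η

/-- Unit mass at `x`. -/
noncomputable def delta (d : ℕ) (x : Site d) : Config d :=
  fun y => if y = x then 1 else 0

/-- The addition operator `a^{(γ)}_{Λ,x} η = S^{(γ)}_Λ(η + δ_x)`. -/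
noncomputable def addOp (d : ℕ) (γ : ℝ) (Λ : Finset (Site d)) (x : Site d)
    (η : Config d) : Config d :=
  stabilize d γ Λ (η + delta d x)

section Aux

variable {d : ℕ} {γ : ℝ} {Λ : Finset (Site d)}

lemma toppleMat_offdiag_nonpos {x z : Site d} (h : x ≠ z) : toppleMat d γ x z ≤ 0 := by
  unfold toppleMat
  rw [if_neg h]
  split <;> norm_num

lemma topple_comm (x y : Site d) (η : Config d) :
    topple d γ x (topple d γ y η) = topple d γ y (topple d γ x η) := by
  funext z; simp [topple]; ring

lemma applyList_eq (l : List (Site d)) (η : Config d) (z : Site d) :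
    applyList d γ l η z = η z - (l.map (fun x => toppleMat d γ x z)).sum := by
  induction l generalizing η with
  | nil => simp [applyList]
  | cons a t ih => simp [applyList, ih, topple]; ring

lemma applyList_perm {l1 l2 : List (Site d)} (h : l1.Perm l2) (η : Config d) :
    applyList d γ l1 η = applyList d γ l2 η := by
  funext z
  rw [applyList_eq, applyList_eq, (h.map _).sum_eq]

lemma applyList_append (l1 l2 : List (Site d)) (η : Config d) :
    applyList d γ (l1 ++ l2) η = applyList d γ l2 (applyList d γ l1 η) := by
  induction l1 generalizing η with
  | nil => simp [applyList]
  | cons a t ih => simp [applyList, ih]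

lemma applyList_add (l : List (Site d)) (η c : Config d) :
    applyList d γ l (η + c) = applyList d γ l η + c := by
  funext z
  simp [applyList_eq, Pi.add_apply]; ring

lemma legal_mono {η η' : Config d} {l : List (Site d)} (h : ∀ z, η z ≤ η' z)
    (hl : legalList d γ Λ η l) : legalList d γ Λ η' l := by
  induction l generalizing η η' with
  | nil => trivial
  | cons a t ih =>
    obtain ⟨ha, hu, ht⟩ := hl
    exact ⟨ha, le_trans hu (h a), ih (fun z => by simpa [topple] using h z) ht⟩

lemma legal_append {η : Config d} {l1 l2 : List (Site d)}
    (h1 : legalList d γ Λ η l1) (h2 : legalList d γ Λ (applyList d γ l1 η) l2) :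
    legalList d γ Λ η (l1 ++ l2) := by
  induction l1 generalizing η with
  | nil => simpa [applyList] using h2
  | cons a t ih =>
    obtain ⟨ha, hu, ht⟩ := h1
    exact ⟨ha, hu, ih ht (by simpa [applyList] using h2)⟩

lemma height_mono_of_not_mem {l : List (Site d)} {z : Site d} (hz : z ∉ l)
    (η : Config d) : η z ≤ applyList d γ l η z := by
  rw [applyList_eq]
  have : (l.map (fun x => toppleMat d γ x z)).sum ≤ 0 := by
    induction l with
    | nil => simp
    | cons a t ih =>
      simp only [List.map_cons, List.sum_cons]
      have ha : a ≠ z := fun h => hz (h ▸ (List.mem_cons_self : a ∈ a :: t))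
      have := ih (fun h => hz (List.mem_cons_of_mem a h))
      have := toppleMat_offdiag_nonpos (γ := γ) ha
      linarith
  linarith

lemma legal_nonneg {η : Config d} {l : List (Site d)} (hl : legalList d γ Λ η l)
    (h0 : ∀ z, 0 ≤ η z) : ∀ z, 0 ≤ applyList d γ l η z := by
  induction l generalizing η with
  | nil => simpa [applyList] using h0
  | cons a t ih =>
    obtain ⟨ha, hu, ht⟩ := hl
    refine ih ht (fun z => ?_)
    by_cases hz : a = z
    · subst hz
      simp [topple, toppleMat]
      linarith
    · have := toppleMat_offdiag_nonpos (γ := γ) hz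
      have := h0 z
      simp only [topple]
      linarith

lemma move_front {η : Config d} {s : List (Site d)} {x : Site d}
    (hs : legalList d γ Λ η s) (hu : 2 * d + γ ≤ η x) (hm : x ∈ s) :
    legalList d γ Λ η (x :: s.erase x) := by
  induction s generalizing η with
  | nil => exact absurd hm List.not_mem_nil
  | cons a t ih =>
    obtain ⟨ha, hau, hat⟩ := hs
    by_cases hax : a = x
    · subst hax
      rw [List.erase_cons_head]
      exact ⟨ha, hu, hat⟩
    · have hmt : x ∈ t := by
        rcases List.mem_cons.mp hm with h | h
        · exact absurd h.symm hax
        · exact h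
      have hux : 2 * d + γ ≤ topple d γ a η x := by
        have := toppleMat_offdiag_nonpos (γ := γ) (x := a) (z := x) hax
        simp only [topple]; linarith
      have ihr := ih hat hux hmt
      obtain ⟨hxΛ, _, hrest⟩ := ihr
      rw [List.erase_cons_tail]
      · refine ⟨hxΛ, hu, ha, ?_, ?_⟩
        · have := toppleMat_offdiag_nonpos (γ := γ) (x := x) (z := a)
            (Ne.symm hax)
          simp only [topple]; linarith
        · rw [topple_comm]; exact hrest
      · simp only [beq_iff_eq]
        exact hax

lemma mem_of_unstable {η : Config d} {s : List (Site d)} {z : Site d}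
    (hzΛ : z ∈ Λ) (hs : stabilizingList d γ Λ η s) (hu : 2 * d + γ ≤ η z) :
    z ∈ s := by
  by_contra hzs
  have := height_mono_of_not_mem (γ := γ) hzs η
  have := hs.2 z hzΛ
  linarith

lemma legal_le_stab {η : Config d} {l s : List (Site d)}
    (hl : legalList d γ Λ η l) (hs : stabilizingList d γ Λ η s) :
    (l : Multiset (Site d)) ≤ (s : Multiset (Site d)) := by
  induction l generalizing η s with
  | nil => simp
  | cons a t ih =>
    obtain ⟨haΛ, hau, hat⟩ := hl
    have hms : a ∈ s := mem_of_unstable haΛ hs hau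
    have hperm : s.Perm (a :: s.erase a) := List.perm_cons_erase hms
    have hs' : stabilizingList d γ Λ η (a :: s.erase a) :=
      ⟨move_front hs.1 hau hms, by
        intro w hw
        rw [← applyList_perm hperm]
        exact hs.2 w hw⟩
    have herase : stabilizingList d γ Λ (topple d γ a η) (s.erase a) :=
      ⟨hs'.1.2.2, fun w hw => hs'.2 w hw⟩
    have := ih hat herase
    calc ((a :: t : List (Site d)) : Multiset (Site d))
        = a ::ₘ (t : Multiset (Site d)) := rfl
      _ ≤ a ::ₘ ((s.erase a : List (Site d)) : Multiset (Site d)) :=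
          Multiset.cons_le_cons a this
      _ = (s : Multiset (Site d)) := (Quot.sound hperm).symm

lemma stab_unique {η : Config d} {l1 l2 : List (Site d)}
    (h1 : stabilizingList d γ Λ η l1) (h2 : stabilizingList d γ Λ η l2) :
    applyList d γ l1 η = applyList d γ l2 η := by
  have hle := legal_le_stab h1.1 h2
  have hge := legal_le_stab h2.1 h1
  have : (l1 : Multiset (Site d)) = (l2 : Multiset (Site d)) := le_antisymm hle hge
  exact applyList_perm (Multiset.coe_eq_coe.mp this) η

lemma stabilize_eq {η : Config d} {l : List (Site d)}
    (hl : stabilizingList d γ Λ η l) :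
    stabilize d γ Λ η = applyList d γ l η := by
  have hE : ∃ l', stabilizingList d γ Λ η l' := ⟨l, hl⟩
  unfold stabilize
  rw [dif_pos hE]
  exact stab_unique hE.choose_spec hl

lemma delta_nonneg (x : Site d) (z : Site d) : 0 ≤ delta d x z := by
  unfold delta; split <;> norm_num

lemma addOp_addOp (x y : Site d)
    (η : Config d) (hη : ∀ z, 0 ≤ η z)
    (hex : ∀ ζ : Config d, (∀ z, 0 ≤ ζ z) → ∃ l, stabilizingList d γ Λ ζ l) :
    addOp d γ Λ x (addOp d γ Λ y η) = stabilize d γ Λ (η + delta d x + delta d y) := by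
  have hηy : ∀ z, 0 ≤ (η + delta d y) z := fun z =>
    add_nonneg (hη z) (delta_nonneg y z)
  obtain ⟨l1, hl1⟩ := hex (η + delta d y) hηy
  set ζ1 := applyList d γ l1 (η + delta d y) with hζ1
  have hζ1nn : ∀ z, 0 ≤ ζ1 z := legal_nonneg hl1.1 hηy
  have hζ1x : ∀ z, 0 ≤ (ζ1 + delta d x) z := fun z =>
    add_nonneg (hζ1nn z) (delta_nonneg x z)
  obtain ⟨l2, hl2⟩ := hex (ζ1 + delta d x) hζ1x
  have hcomm : η + delta d x + delta d y = (η + delta d y) + delta d x := by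
    abel
  have key : stabilizingList d γ Λ ((η + delta d y) + delta d x) (l1 ++ l2) := by
    constructor
    · apply legal_append
      · exact legal_mono (fun z => by
          simp only [Pi.add_apply]
          exact le_add_of_nonneg_right (delta_nonneg x z)) hl1.1
      · rw [applyList_add]
        exact hl2.1
    · intro w hw
      rw [applyList_append, applyList_add]
      exact hl2.2 w hw
  have h1 : stabilize d γ Λ (η + delta d y) = ζ1 := stabilize_eq hl1
  unfold addOp
  rw [hcomm, stabilize_eq key, applyList_append, applyList_add, ← hζ1, h1]
  exact stabilize_eq hl2

end Aux

/-- Addition operators commute, and both compositions equal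
`S^{(γ)}_Λ(η + δ_x + δ_y)`. -/
theorem addOp_comm (d : ℕ) (hd : 0 < d) (γ : ℝ) (hγ : 0 ≤ γ)
    (Λ : Finset (Site d)) (x y : Site d) (hx : x ∈ Λ) (hy : y ∈ Λ)
    (η : Config d) (hη : ∀ z, 0 ≤ η z ∧ η z < 2 * d + γ)
    (hex : ∀ ζ : Config d, (∀ z, 0 ≤ ζ z) → ∃ l, stabilizingList d γ Λ ζ l) :
    addOp d γ Λ x (addOp d γ Λ y η) = addOp d γ Λ y (addOp d γ Λ x η) ∧
      addOp d γ Λ x (addOp d γ Λ y η) = stabilize d γ Λ (η + delta d x + delta d y) := by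
  have h0 : ∀ z, 0 ≤ η z := fun z => (hη z).1
  refine ⟨?_, addOp_addOp x y η h0 hex⟩
  rw [addOp_addOp x y η h0 hex, addOp_addOp y x η h0 hex]
  have : η + delta d x + delta d y = η + delta d y + delta d x := by abel
  rw [this]
end

section
/- For finite Λ ⊂ Z^d and γ ≥ 0, the Lebesgue volume of the set R^{(γ)}_Λ of allowed stable configurations equals det(Δ^{(γ)}_Λ). -/
/-- Sites of a finite volume `Λ ⊂ ℤ^d`. -/
abbrev SiteIn (d : ℕ) (Λ : Finset (Site d)) := {z : Site d // z ∈ Λ}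

/-- Height configurations in the finite volume `Λ`. -/
abbrev ConfigIn (d : ℕ) (Λ : Finset (Site d)) := SiteIn d Λ → ℝ

/-- The toppling matrix `Δ^{(γ)}_Λ` restricted to `Λ`. -/
noncomputable def toppleMatIn (d : ℕ) (γ : ℝ) (Λ : Finset (Site d)) :
    Matrix (SiteIn d Λ) (SiteIn d Λ) ℝ :=
  fun x y =>
    if (x : Site d) = (y : Site d) then 2 * d + γ
    else if dist1 (x : Site d) (y : Site d) = 1 then -1 else 0

/-- `η` is allowed: it contains no forbidden subconfiguration, i.e. for every
nonempty `W ⊆ Λ` there is `y ∈ W` whose height is at least the number of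
neighbors of `y` inside `W`. -/
def isAllowed (d : ℕ) (Λ : Finset (Site d)) (η : ConfigIn d Λ) : Prop :=
  ∀ W : Finset (SiteIn d Λ), W.Nonempty →
    ∃ y ∈ W,
      ((W.filter fun z : SiteIn d Λ => dist1 (z : Site d) (y : Site d) = 1).card : ℝ) ≤ η y

/-- The set `R^{(γ)}_Λ` of allowed stable configurations in `[0, 2d+γ)^Λ`. -/
def allowedSet (d : ℕ) (γ : ℝ) (Λ : Finset (Site d)) : Set (ConfigIn d Λ) :=
  {η | (∀ y, 0 ≤ η y ∧ η y < 2 * d + γ) ∧ isAllowed d Λ η}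


open MeasureTheory Finset Function
open scoped ENNReal

set_option linter.unusedSectionVars false

namespace SandVol


variable {ι : Type*} [Fintype ι] [DecidableEq ι]
variable (N : ι → ι → Prop) [DecidableRel N]

/-- number of `N`-neighbors of `y` inside `V`. -/
def degIn (V : Finset ι) (y : ι) : ℕ := (V.filter fun z => N z y).card

/-- Ambient matrix: the matrix of the weighted graph on `V` with diagonal `dia`,
extended by the identity outside `V`. -/
noncomputable def Mat (V : Finset ι) (dia : ι → ℝ) : Matrix ι ι ℝ :=
  fun x y =>
    if x ∈ V ∧ y ∈ V then (if x = y then dia x else if N x y then -1 else 0)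
    else (if x = y then 1 else 0)

theorem Mat_congr (V : Finset ι) (d₁ d₂ : ι → ℝ) (h : ∀ x ∈ V, d₁ x = d₂ x) :
    Mat N V d₁ = Mat N V d₂ := by
  ext x y
  unfold Mat
  by_cases h1 : x ∈ V ∧ y ∈ V
  · by_cases hxy : x = y <;> simp [h1, hxy, h x h1.1, h y h1.2]
  · simp [h1]

theorem det_Mat_expand (d c : ι → ℝ) :
    ∀ T V : Finset ι, T ⊆ V →
      (Mat N V (fun x => d x + if x ∈ T then c x else 0)).det
        = ∑ S ∈ T.powerset, (∏ y ∈ S, c y) * (Mat N (V \ S) d).det := by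
  intro T
  induction T using Finset.induction_on with
  | empty =>
      intro V _
      simp [Mat]
  | @insert a T' ha IH =>
      intro V hTV
      have haV : a ∈ V := hTV (mem_insert_self a T')
      have hT'V : T' ⊆ V := (Finset.subset_insert a T').trans hTV
      have hPQ : Mat N V (fun x => d x + if x ∈ insert a T' then c x else 0)
          = (Mat N V (fun x => d x + if x ∈ T' then c x else 0)).updateRow a
              (fun y => Mat N V (fun x => d x + if x ∈ T' then c x else 0) a y
                + c a • (Pi.single a 1 : ι → ℝ) y) := by
        ext x y
        rw [Matrix.updateRow_apply]
        by_cases hx : x = a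
        · subst hx
          by_cases hy : y = x
          · subst hy
            simp [Mat, haV, Pi.single_apply, ha]
          · simp [Mat, hy, Pi.single_apply, Ne.symm hy]
        · have hxT : (x ∈ insert a T') ↔ (x ∈ T') := by
            simp [Finset.mem_insert, hx]
          simp only [if_neg hx, Mat]
          by_cases h1 : x ∈ V ∧ y ∈ V
          · by_cases hxy : x = y
            · subst hxy
              simp [h1, hx]
            · simp [h1, hxy]
          · simp [h1]
      rw [hPQ]
      have step1 : ∀ Q : Matrix ι ι ℝ,
          (Q.updateRow a (fun y => Q a y + c a • (Pi.single a 1 : ι → ℝ) y)).det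
          = Q.det + c a * (Q.updateRow a (Pi.single a 1)).det := by
        intro Q
        have : (fun y => Q a y + c a • (Pi.single a 1 : ι → ℝ) y)
            = (fun y => Q a y) + (c a • (Pi.single a 1 : ι → ℝ)) := by
          funext y; simp
        rw [this, Matrix.det_updateRow_add, Matrix.det_updateRow_smul]
        simp [Matrix.updateRow_eq_self]
      rw [step1]
      -- clearing the column
      have step2 : ∀ Q : Matrix ι ι ℝ, (∀ y, Q a y = (Pi.single a 1 : ι → ℝ) y) →
          Q.det = (Q.updateCol a (Pi.single a 1)).det := by
        intro Q hQa
        have hcol : (fun x => Q x a)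
            = (Pi.single a 1 : ι → ℝ) + (fun x => Q x a - (Pi.single a 1 : ι → ℝ) x) := by
          funext x; simp
        have h0 : (Q.updateCol a (fun x => Q x a - (Pi.single a 1 : ι → ℝ) x)).det = 0 := by
          apply Matrix.det_eq_zero_of_row_eq_zero a
          intro y
          by_cases hy : y = a
          · subst hy
            rw [Matrix.updateCol_self]
            simp [hQa]
          · rw [Matrix.updateCol_ne hy]
            simpa [Pi.single_apply, Ne.symm hy] using hQa y
        have : Q = Q.updateCol a (fun x => Q x a) := by
          rw [Matrix.updateCol_eq_self]
        conv_lhs => rw [this, hcol, Matrix.det_updateCol_add, h0]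
        simp
      have hrow : ∀ y, ((Mat N V (fun x => d x + if x ∈ T' then c x else 0)).updateRow a
          (Pi.single a 1)) a y = (Pi.single a 1 : ι → ℝ) y := by
        intro y; rw [Matrix.updateRow_self]
      rw [step2 ((Mat N V (fun x => d x + if x ∈ T' then c x else 0)).updateRow a
          (Pi.single a 1)) hrow]
      -- identify the cleared matrix
      have hclear :
          ((Mat N V (fun x => d x + if x ∈ T' then c x else 0)).updateRow a
            (Pi.single a 1)).updateCol a (Pi.single a 1)
          = Mat N (V.erase a) (fun x => d x + if x ∈ T' then c x else 0) := by
        ext x y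
        rw [Matrix.updateCol_apply, Matrix.updateRow_apply]
        by_cases hy : y = a
        · subst hy
          have h2 : ¬ (x ∈ V.erase y ∧ y ∈ V.erase y) := by simp
          simp [Mat, h2, Pi.single_apply]
        · rw [if_neg hy]
          by_cases hx : x = a
          · rw [if_pos hx]
            have h2 : ¬ (x ∈ V.erase a ∧ y ∈ V.erase a) := by simp [hx]
            simp [Mat, h2, Pi.single_apply, hx, hy, Ne.symm hy]
          · rw [if_neg hx]
            unfold Mat
            by_cases h1 : x ∈ V ∧ y ∈ V
            · have h2 : x ∈ V.erase a ∧ y ∈ V.erase a := by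
                simp [Finset.mem_erase, hx, hy, h1.1, h1.2]
              rw [if_pos h1, if_pos h2]
            · have h2 : ¬ (x ∈ V.erase a ∧ y ∈ V.erase a) := by
                simp only [Finset.mem_erase]; tauto
              rw [if_neg h1, if_neg h2]
      rw [hclear, IH V hT'V, IH (V.erase a) (fun z hz => Finset.mem_erase.2 ⟨fun h => ha (h ▸ hz), hT'V hz⟩)]
      rw [Finset.sum_powerset_insert ha]
      congr 1
      rw [Finset.mul_sum]
      apply Finset.sum_congr rfl
      intro S hS
      have haS : a ∉ S := fun h => ha (Finset.mem_powerset.1 hS h)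
      rw [Finset.prod_insert haS]
      have hsd : V.erase a \ S = V \ insert a S := by
        ext z
        simp only [Finset.mem_erase, Finset.mem_sdiff, Finset.mem_insert]
        tauto
      rw [hsd]
      ring



theorem filter_comm_of_symm (hsym : Symmetric N) (V : Finset ι) (x : ι) :
    V.filter (fun z => N z x) = V.filter (fun z => N x z) := by
  apply Finset.filter_congr
  intro z _
  exact ⟨fun h => hsym h, fun h => hsym h⟩

theorem det_Mat_deg_zero (hsym : Symmetric N) (hirr : ∀ x, ¬ N x x)
    {V : Finset ι} (hV : V.Nonempty) :
    (Mat N V (fun x => (degIn N V x : ℝ))).det = 0 := by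
  rw [← Matrix.exists_mulVec_eq_zero_iff]
  refine ⟨fun y => if y ∈ V then 1 else 0, ?_, ?_⟩
  · obtain ⟨y0, hy0⟩ := hV
    intro h
    have := congrFun h y0
    simp [hy0] at this
  · funext x
    simp only [Matrix.mulVec, dotProduct, mul_ite, mul_one, mul_zero,
      Finset.sum_ite_mem, Finset.univ_inter, Pi.zero_apply]
    by_cases hx : x ∈ V
    · rw [← Finset.add_sum_erase _ _ hx]
      have h1 : Mat N V (fun x => (degIn N V x : ℝ)) x x = (degIn N V x : ℝ) := by
        simp [Mat, hx]
      have h2 : ∀ y ∈ V.erase x, Mat N V (fun x => (degIn N V x : ℝ)) x y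
          = if N x y then -1 else 0 := by
        intro y hy
        have hyV : y ∈ V := Finset.mem_of_mem_erase hy
        have hxy : ¬ x = y := fun h => (Finset.ne_of_mem_erase hy) h.symm
        simp [Mat, hx, hyV, hxy]
      rw [Finset.sum_congr rfl h2, h1]
      have h3 : (∑ y ∈ V.erase x, if N x y then (-1:ℝ) else 0)
          = - (((V.erase x).filter (fun y => N x y)).card : ℝ) := by
        rw [Finset.sum_ite, Finset.sum_const, Finset.sum_const]
        simp
      have h4 : (V.erase x).filter (fun y => N x y) = V.filter (fun z => N z x) := by
        rw [Finset.filter_erase, Finset.erase_eq_of_notMem (by simp [hirr x]),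
          ← filter_comm_of_symm N hsym]
      rw [h3, h4]
      simp [degIn]
    · have h2 : ∀ y ∈ V, Mat N V (fun x => (degIn N V x : ℝ)) x y = 0 := by
        intro y hy
        have hxy : ¬ x = y := fun h => hx (h ▸ hy)
        simp [Mat, hx, hxy]
      rw [Finset.sum_congr rfl h2]
      simp


theorem degIn_split (S V : Finset ι) (hSV : S ⊆ V) (x : ι) :
    degIn N V x = degIn N (V \ S) x + degIn N S x := by
  unfold degIn
  rw [← Finset.card_union_of_disjoint
      (Finset.disjoint_filter_filter Finset.sdiff_disjoint),
    ← Finset.filter_union, Finset.sdiff_union_of_subset hSV]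

theorem det_Mat_rec (hsym : Symmetric N) (hirr : ∀ x, ¬ N x x)
    (V : Finset ι) (hV : V.Nonempty) (c : ι → ℝ) :
    (Mat N V (fun x => (degIn N V x : ℝ) + c x)).det
      = ∑ S ∈ V.powerset.erase ∅, (∏ y ∈ S, c y) *
          (Mat N (V \ S) (fun x => (degIn N (V \ S) x : ℝ) + (degIn N S x : ℝ))).det := by
  have h := det_Mat_expand N (fun x => (degIn N V x : ℝ)) c V V (subset_refl V)
  have hL : Mat N V (fun x => (degIn N V x : ℝ) + if x ∈ V then c x else 0)
      = Mat N V (fun x => (degIn N V x : ℝ) + c x) :=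
    Mat_congr N V _ _ (fun x hx => by simp [hx])
  rw [hL] at h
  rw [h, ← Finset.add_sum_erase _ _ (Finset.empty_mem_powerset V)]
  have hz : (Mat N (V \ ∅) (fun x => (degIn N V x : ℝ))).det = 0 := by
    rw [Finset.sdiff_empty]
    exact det_Mat_deg_zero N hsym hirr hV
  rw [hz]
  simp only [Finset.prod_empty, one_mul, mul_zero, zero_add]
  apply Finset.sum_congr rfl
  intro S hS
  have hSV : S ⊆ V := Finset.mem_powerset.1 (Finset.mem_of_mem_erase hS)
  congr 1
  apply congrArg
  apply Mat_congr
  intro x _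
  rw [degIn_split N S V hSV x]
  push_cast
  ring



variable {ι : Type*} [Fintype ι] [DecidableEq ι]
variable (N : ι → ι → Prop) [DecidableRel N]

/-- The allowed stable configurations on `V` with extra capacity `c`. -/
def ASet (V : Finset ι) (c : ι → ℝ) : Set (ι → ℝ) :=
  {η | (∀ y ∈ V, 0 ≤ η y ∧ η y < degIn N V y + c y) ∧
    ∀ W ⊆ V, W.Nonempty → ∃ y ∈ W, ((degIn N W y : ℝ)) ≤ η y}

/-- Configurations whose restriction to `S` is "burnable in `V`" and stable. -/
def BSet (V S : Finset ι) (c : ι → ℝ) : Set (ι → ℝ) :=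
  {η | ∀ y ∈ S, (degIn N V y : ℝ) ≤ η y ∧ η y < degIn N V y + c y}

theorem degIn_mono {W V : Finset ι} (h : W ⊆ V) (y : ι) : degIn N W y ≤ degIn N V y :=
  Finset.card_le_card (Finset.filter_subset_filter _ h)

theorem measurableSet_ASet (V : Finset ι) (c : ι → ℝ) : MeasurableSet (ASet N V c) := by
  have : ASet N V c =
      (⋂ y ∈ (V : Set ι), {η : ι → ℝ | 0 ≤ η y ∧ η y < degIn N V y + c y}) ∩
      (⋂ (W : Finset ι) (_ : W ⊆ V) (_ : W.Nonempty),
        ⋃ y ∈ (W : Set ι), {η : ι → ℝ | (degIn N W y : ℝ) ≤ η y}) := by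
    ext η
    simp only [ASet, Set.mem_setOf_eq, Set.mem_inter_iff, Set.mem_iInter, Set.mem_iUnion,
      Finset.mem_coe, Set.mem_setOf_eq]
    constructor
    · rintro ⟨h1, h2⟩
      refine ⟨h1, fun W hW hne => ?_⟩
      obtain ⟨y, hyW, hy⟩ := h2 W hW hne
      exact ⟨y, hyW, hy⟩
    · rintro ⟨h1, h2⟩
      refine ⟨h1, fun W hW hne => ?_⟩
      obtain ⟨y, hyW, hy⟩ := h2 W hW hne
      exact ⟨y, hyW, hy⟩
  rw [this]
  apply MeasurableSet.inter
  · apply MeasurableSet.biInter (Set.to_countable _)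
    intro y _
    have : {η : ι → ℝ | 0 ≤ η y ∧ η y < degIn N V y + c y}
        = (fun η : ι → ℝ => η y) ⁻¹' (Set.Ico 0 (degIn N V y + c y)) := rfl
    rw [this]
    exact (measurable_pi_apply y) measurableSet_Ico
  · apply MeasurableSet.iInter
    intro W
    apply MeasurableSet.iInter
    intro _
    apply MeasurableSet.iInter
    intro _
    apply MeasurableSet.biUnion (Set.to_countable _)
    intro y _
    have : {η : ι → ℝ | (degIn N W y : ℝ) ≤ η y}
        = (fun η : ι → ℝ => η y) ⁻¹' (Set.Ici (degIn N W y : ℝ)) := rfl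
    rw [this]
    exact (measurable_pi_apply y) measurableSet_Ici

theorem measurableSet_BSet (V S : Finset ι) (c : ι → ℝ) : MeasurableSet (BSet N V S c) := by
  have : BSet N V S c =
      ⋂ y ∈ (S : Set ι), (fun η : ι → ℝ => η y) ⁻¹'
        (Set.Ico (degIn N V y : ℝ) (degIn N V y + c y)) := by
    ext η
    simp only [BSet, Set.mem_setOf_eq, Set.mem_iInter, Finset.mem_coe, Set.mem_preimage,
      Set.mem_Ico]
  rw [this]
  apply MeasurableSet.biInter (Set.to_countable _)
  intro y _
  exact (measurable_pi_apply y) measurableSet_Ico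

theorem mem_ASet_congr (V : Finset ι) (c : ι → ℝ) {η₁ η₂ : ι → ℝ}
    (h : ∀ y ∈ V, η₁ y = η₂ y) : η₁ ∈ ASet N V c ↔ η₂ ∈ ASet N V c := by
  unfold ASet
  constructor <;> intro ⟨h1, h2⟩
  · refine ⟨fun y hy => (h y hy) ▸ h1 y hy, fun W hW hWne => ?_⟩
    obtain ⟨y, hyW, hy⟩ := h2 W hW hWne
    exact ⟨y, hyW, (h y (hW hyW)) ▸ hy⟩
  · refine ⟨fun y hy => (h y hy).symm ▸ h1 y hy, fun W hW hWne => ?_⟩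
    obtain ⟨y, hyW, hy⟩ := h2 W hW hWne
    exact ⟨y, hyW, (h y (hW hyW)).symm ▸ hy⟩

/-- The pointwise partition of the allowed set according to the set of sites that
are burnable in the first round of the burning algorithm. -/
theorem indicator_partition (V : Finset ι) (hV : V.Nonempty) (c : ι → ℝ)
    (hc : ∀ y, 0 ≤ c y) (η : ι → ℝ) :
    (ASet N V c).indicator (1 : (ι → ℝ) → ℝ≥0∞) η
      = ∑ S ∈ V.powerset.erase ∅,
          (BSet N V S c).indicator 1 η *
            (ASet N (V \ S) (fun y => (degIn N S y : ℝ))).indicator 1 η := by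
  classical
  by_cases h : η ∈ ASet N V c
  · rw [Set.indicator_of_mem h]
    set T := V.filter (fun y => (degIn N V y : ℝ) ≤ η y) with hT
    have hTV : T ⊆ V := Finset.filter_subset _ _
    have hTne : T.Nonempty := by
      obtain ⟨y, hyV, hy⟩ := h.2 V (subset_refl V) hV
      exact ⟨y, Finset.mem_filter.2 ⟨hyV, hy⟩⟩
    have hTmem : T ∈ V.powerset.erase ∅ :=
      Finset.mem_erase.2 ⟨Finset.nonempty_iff_ne_empty.1 hTne, Finset.mem_powerset.2 hTV⟩
    rw [Finset.sum_eq_single_of_mem T hTmem]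
    · have hB : η ∈ BSet N V T c := by
        intro y hy
        obtain ⟨hyV, hyb⟩ := Finset.mem_filter.1 hy
        exact ⟨hyb, (h.1 y hyV).2⟩
      have hA : η ∈ ASet N (V \ T) (fun y => (degIn N T y : ℝ)) := by
        constructor
        · intro y hy
          obtain ⟨hyV, hyT⟩ := Finset.mem_sdiff.1 hy
          refine ⟨(h.1 y hyV).1, ?_⟩
          have : ¬ (degIn N V y : ℝ) ≤ η y := fun hb => hyT (Finset.mem_filter.2 ⟨hyV, hb⟩)
          have h2 : η y < (degIn N V y : ℝ) := lt_of_not_ge this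
          calc η y < (degIn N V y : ℝ) := h2
            _ = (degIn N (V \ T) y : ℝ) + (degIn N T y : ℝ) := by
                rw [degIn_split N T V hTV y]; push_cast; ring
        · intro W hW hWne
          exact h.2 W (hW.trans (Finset.sdiff_subset)) hWne
      rw [Set.indicator_of_mem hB, Set.indicator_of_mem hA]
      simp
    · intro S hS hST
      by_cases hB : η ∈ BSet N V S c
      · by_cases hA : η ∈ ASet N (V \ S) (fun y => (degIn N S y : ℝ))
        · exfalso
          apply hST
          have hSV : S ⊆ V := Finset.mem_powerset.1 (Finset.mem_of_mem_erase hS)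
          apply Finset.Subset.antisymm
          · intro y hy
            exact Finset.mem_filter.2 ⟨hSV hy, (hB y hy).1⟩
          · intro y hy
            obtain ⟨hyV, hyb⟩ := Finset.mem_filter.1 hy
            by_contra hyS
            have hyVS : y ∈ V \ S := Finset.mem_sdiff.2 ⟨hyV, hyS⟩
            have := (hA.1 y hyVS).2
            rw [show (degIn N (V \ S) y : ℝ) + (degIn N S y : ℝ) = (degIn N V y : ℝ) by
              rw [degIn_split N S V hSV y]; push_cast; ring] at this
            exact absurd hyb (not_le.2 this)
        · rw [Set.indicator_of_notMem hA, mul_zero]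
      · rw [Set.indicator_of_notMem hB, zero_mul]
  · rw [Set.indicator_of_notMem h]
    symm
    apply Finset.sum_eq_zero
    intro S hS
    have hSV : S ⊆ V := Finset.mem_powerset.1 (Finset.mem_of_mem_erase hS)
    by_cases hB : η ∈ BSet N V S c
    · by_cases hA : η ∈ ASet N (V \ S) (fun y => (degIn N S y : ℝ))
      · exfalso
        apply h
        constructor
        · intro y hyV
          by_cases hyS : y ∈ S
          · refine ⟨le_trans (Nat.cast_nonneg _) (hB y hyS).1, (hB y hyS).2⟩
          · have hyVS : y ∈ V \ S := Finset.mem_sdiff.2 ⟨hyV, hyS⟩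
            refine ⟨(hA.1 y hyVS).1, ?_⟩
            calc η y < (degIn N (V \ S) y : ℝ) + (degIn N S y : ℝ) := (hA.1 y hyVS).2
              _ = (degIn N V y : ℝ) := by rw [degIn_split N S V hSV y]; push_cast; ring
              _ ≤ (degIn N V y : ℝ) + c y := le_add_of_nonneg_right (hc y)
        · intro W hW hWne
          by_cases hWS : ∃ y ∈ W, y ∈ S
          · obtain ⟨y, hyW, hyS⟩ := hWS
            refine ⟨y, hyW, le_trans ?_ (hB y hyS).1⟩
            exact_mod_cast degIn_mono N hW y
          · push_neg at hWS
            have hWVS : W ⊆ V \ S := fun y hy =>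
              Finset.mem_sdiff.2 ⟨hW hy, hWS y hy⟩
            exact hA.2 W hWVS hWne
      · rw [Set.indicator_of_notMem hA, mul_zero]
    · rw [Set.indicator_of_notMem hB, zero_mul]


theorem ofReal_prod_of_nonneg {α : Type*} {s : Finset α} {f : α → ℝ}
    (hf : ∀ i ∈ s, 0 ≤ f i) :
    ENNReal.ofReal (∏ i ∈ s, f i) = ∏ i ∈ s, ENNReal.ofReal (f i) := by
  induction s using Finset.cons_induction with
  | empty => simp
  | cons a s ha ih =>
      rw [Finset.prod_cons, Finset.prod_cons,
        ENNReal.ofReal_mul (hf a (Finset.mem_cons_self a s)),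
        ih (fun i hi => hf i (Finset.mem_cons_of_mem hi))]

theorem lmarginal_ASet (hsym : Symmetric N) (hirr : ∀ x, ¬ N x x) (V : Finset ι) :
    ∀ c : ι → ℝ, (∀ y, 0 ≤ c y) →
      0 ≤ (Mat N V (fun z => (degIn N V z : ℝ) + c z)).det ∧
      ∀ x : ι → ℝ,
        (∫⋯∫⁻_V, (ASet N V c).indicator 1 ∂fun _ => (volume : Measure ℝ)) x
          = ENNReal.ofReal (Mat N V (fun z => (degIn N V z : ℝ) + c z)).det := by
  induction V using Finset.strongInduction with
  | _ V IH =>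
    intro c hc
    rcases V.eq_empty_or_nonempty with rfl | hV
    · have hone : (Mat N ∅ fun z => (degIn N ∅ z : ℝ) + c z) = (1 : Matrix ι ι ℝ) := by
        ext x y
        have : ¬ (x ∈ (∅ : Finset ι) ∧ y ∈ (∅ : Finset ι)) := by simp
        simp [Mat, this, Matrix.one_apply]
      have hAuniv : ASet N ∅ c = Set.univ := by
        ext η
        simp only [ASet, Set.mem_setOf_eq, Set.mem_univ, iff_true]
        constructor
        · intro y hy; exact absurd hy (Finset.notMem_empty y)
        · intro W hW hne
          exact absurd (Finset.subset_empty.1 hW) (Finset.nonempty_iff_ne_empty.1 hne)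
      rw [hone, Matrix.det_one]
      refine ⟨zero_le_one, fun x => ?_⟩
      rw [lmarginal_empty, hAuniv]
      simp
    · have hSne : ∀ S ∈ V.powerset.erase ∅, S.Nonempty := fun S hS =>
        Finset.nonempty_iff_ne_empty.2 (Finset.ne_of_mem_erase hS)
      have hSsub : ∀ S ∈ V.powerset.erase ∅, S ⊆ V := fun S hS =>
        Finset.mem_powerset.1 (Finset.mem_of_mem_erase hS)
      have hIH : ∀ S ∈ V.powerset.erase ∅,
          0 ≤ (Mat N (V \ S) (fun z => (degIn N (V \ S) z : ℝ) + (degIn N S z : ℝ))).det ∧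
          ∀ x : ι → ℝ,
            (∫⋯∫⁻_(V \ S), (ASet N (V \ S) (fun y => (degIn N S y : ℝ))).indicator 1
              ∂fun _ => (volume : Measure ℝ)) x
            = ENNReal.ofReal
                (Mat N (V \ S) (fun z => (degIn N (V \ S) z : ℝ) + (degIn N S z : ℝ))).det :=
        fun S hS => IH (V \ S) (Finset.sdiff_ssubset (hSsub S hS) (hSne S hS)) _
          (fun y => Nat.cast_nonneg _)
      have hrec := det_Mat_rec N hsym hirr V hV c
      have hterm0 : ∀ S ∈ V.powerset.erase ∅,
          0 ≤ (∏ y ∈ S, c y) *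
            (Mat N (V \ S) (fun z => (degIn N (V \ S) z : ℝ) + (degIn N S z : ℝ))).det :=
        fun S hS => mul_nonneg (Finset.prod_nonneg fun y _ => hc y) (hIH S hS).1
      have hdet0 : 0 ≤ (Mat N V (fun z => (degIn N V z : ℝ) + c z)).det := by
        rw [hrec]; exact Finset.sum_nonneg hterm0
      refine ⟨hdet0, fun x => ?_⟩
      have hfun : (ASet N V c).indicator (1 : (ι → ℝ) → ℝ≥0∞)
          = fun η => ∑ S ∈ V.powerset.erase ∅,
              (BSet N V S c).indicator 1 η *
                (ASet N (V \ S) (fun y => (degIn N S y : ℝ))).indicator 1 η :=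
        funext (indicator_partition N V hV c hc)
      have hmeasS : ∀ S : Finset ι, Measurable (fun η : ι → ℝ =>
          (BSet N V S c).indicator (1 : (ι → ℝ) → ℝ≥0∞) η *
            (ASet N (V \ S) (fun y => (degIn N S y : ℝ))).indicator 1 η) :=
        fun S => ((measurable_const.indicator (measurableSet_BSet N V S c)).mul
          (measurable_const.indicator (measurableSet_ASet N _ _)))
      rw [hfun]
      have hsum : (∫⋯∫⁻_V, (fun η => ∑ S ∈ V.powerset.erase ∅,
            (BSet N V S c).indicator 1 η *
              (ASet N (V \ S) (fun y => (degIn N S y : ℝ))).indicator 1 η)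
            ∂fun _ => (volume : Measure ℝ)) x
          = ∑ S ∈ V.powerset.erase ∅, (∫⋯∫⁻_V, (fun η =>
              (BSet N V S c).indicator 1 η *
                (ASet N (V \ S) (fun y => (degIn N S y : ℝ))).indicator 1 η)
              ∂fun _ => (volume : Measure ℝ)) x := by
        simp only [lmarginal]
        rw [lintegral_finset_sum]
        intro S hS
        exact (hmeasS S).comp measurable_updateFinset
      rw [hsum]
      have hterm : ∀ S ∈ V.powerset.erase ∅,
          (∫⋯∫⁻_V, (fun η => (BSet N V S c).indicator 1 η *
              (ASet N (V \ S) (fun y => (degIn N S y : ℝ))).indicator 1 η)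
            ∂fun _ => (volume : Measure ℝ)) x
          = (∏ y ∈ S, ENNReal.ofReal (c y)) *
            ENNReal.ofReal
              (Mat N (V \ S) (fun z => (degIn N (V \ S) z : ℝ) + (degIn N S z : ℝ))).det := by
        intro S hS
        have hVsplit : (V \ S) ∪ S = V := Finset.sdiff_union_of_subset (hSsub S hS)
        have hsplit := lmarginal_union (fun _ : ι => (volume : Measure ℝ))
          (fun η => (BSet N V S c).indicator 1 η *
            (ASet N (V \ S) (fun y => (degIn N S y : ℝ))).indicator 1 η)
          (hmeasS S) (Finset.sdiff_disjoint (t := V) (s := S))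
        rw [hVsplit] at hsplit
        rw [hsplit]
        have hinner : (∫⋯∫⁻_S, (fun η => (BSet N V S c).indicator 1 η *
              (ASet N (V \ S) (fun y => (degIn N S y : ℝ))).indicator 1 η)
              ∂fun _ => (volume : Measure ℝ))
            = fun z => (∏ y ∈ S, ENNReal.ofReal (c y)) *
              (ASet N (V \ S) (fun y => (degIn N S y : ℝ))).indicator 1 z := by
          funext z
          simp only [lmarginal]
          have hA : ∀ y : (i : S) → ℝ,
              (ASet N (V \ S) (fun y => (degIn N S y : ℝ))).indicator
                (1 : (ι → ℝ) → ℝ≥0∞) (updateFinset z S y)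
              = (ASet N (V \ S) (fun y => (degIn N S y : ℝ))).indicator 1 z := by
            intro y
            have hmemeq : ∀ w ∈ V \ S, updateFinset z S y w = z w := by
              intro w hw
              have hwS : w ∉ S := (Finset.mem_sdiff.1 hw).2
              simp [updateFinset, hwS]
            have hiff := mem_ASet_congr N (V \ S) (fun y => (degIn N S y : ℝ)) hmemeq
            by_cases hz : z ∈ ASet N (V \ S) (fun y => (degIn N S y : ℝ))
            · rw [Set.indicator_of_mem hz, Set.indicator_of_mem (hiff.2 hz)]
              rfl
            · rw [Set.indicator_of_notMem hz,
                Set.indicator_of_notMem (fun hm => hz (hiff.1 hm))]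
          have hconst_ne : (ASet N (V \ S) (fun y => (degIn N S y : ℝ))).indicator
              (1 : (ι → ℝ) → ℝ≥0∞) z ≠ ⊤ := by
            by_cases hz : z ∈ ASet N (V \ S) (fun y => (degIn N S y : ℝ)) <;>
              simp [hz]
          calc ∫⁻ y : (i : S) → ℝ,
                (fun η => (BSet N V S c).indicator 1 η *
                  (ASet N (V \ S) (fun y => (degIn N S y : ℝ))).indicator 1 η)
                  (updateFinset z S y) ∂(Measure.pi fun _ : S => volume)
              = ∫⁻ y : (i : S) → ℝ,
                  (BSet N V S c).indicator 1 (updateFinset z S y) *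
                    (ASet N (V \ S) (fun y => (degIn N S y : ℝ))).indicator 1 z
                  ∂(Measure.pi fun _ : S => volume) := by
                apply lintegral_congr
                intro y
                simp only
                rw [hA y]
            _ = (∫⁻ y : (i : S) → ℝ, (BSet N V S c).indicator 1 (updateFinset z S y)
                  ∂(Measure.pi fun _ : S => volume)) *
                  (ASet N (V \ S) (fun y => (degIn N S y : ℝ))).indicator 1 z := by
                rw [lintegral_mul_const' _ _ hconst_ne]
            _ = (∏ y ∈ S, ENNReal.ofReal (c y)) *
                  (ASet N (V \ S) (fun y => (degIn N S y : ℝ))).indicator 1 z := by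
                congr 1
                have hbox : (fun y : (i : S) → ℝ =>
                    (BSet N V S c).indicator (1 : (ι → ℝ) → ℝ≥0∞) (updateFinset z S y))
                    = (Set.univ.pi fun i : S =>
                        Set.Ico ((degIn N V i : ℝ)) ((degIn N V i : ℝ) + c i)).indicator 1 := by
                  funext y
                  by_cases hy : updateFinset z S y ∈ BSet N V S c
                  · have hmem2 : y ∈ Set.univ.pi (fun i : S =>
                        Set.Ico ((degIn N V i : ℝ)) ((degIn N V i : ℝ) + c i)) := by
                      intro i _
                      have h2 := hy i.1 i.2
                      have h3 : updateFinset z S y i.1 = y i := by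
                        simp [updateFinset, i.2]
                      rw [h3] at h2
                      simpa [Set.mem_Ico] using h2
                    rw [Set.indicator_of_mem hy, Set.indicator_of_mem hmem2]
                    rfl
                  · have hmem2 : y ∉ Set.univ.pi (fun i : S =>
                        Set.Ico ((degIn N V i : ℝ)) ((degIn N V i : ℝ) + c i)) := by
                      intro hmem
                      apply hy
                      intro w hwS
                      have h3 : updateFinset z S y w = y ⟨w, hwS⟩ := by
                        simp [updateFinset, hwS]
                      rw [h3]
                      simpa [Set.mem_Ico] using hmem ⟨w, hwS⟩ (Set.mem_univ _)
                    rw [Set.indicator_of_notMem hy, Set.indicator_of_notMem hmem2]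
                rw [hbox, lintegral_indicator (MeasurableSet.univ_pi fun i => measurableSet_Ico)]
                simp only [Pi.one_apply]
                rw [setLIntegral_one, Measure.pi_pi]
                have hIco : ∀ i : S, (volume : Measure ℝ)
                    (Set.Ico ((degIn N V i : ℝ)) ((degIn N V i : ℝ) + c i))
                    = ENNReal.ofReal (c i) := by
                  intro i
                  rw [Real.volume_Ico, add_sub_cancel_left]
                rw [Finset.prod_congr rfl (fun i _ => hIco i)]
                exact Finset.prod_coe_sort S (fun y => ENNReal.ofReal (c y))
        rw [hinner]
        simp only [lmarginal]
        rw [lintegral_const_mul' _ _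
          (ENNReal.prod_ne_top (fun a _ => ENNReal.ofReal_ne_top))]
        congr 1
        exact (hIH S hS).2 x
      rw [Finset.sum_congr rfl hterm, hrec, ENNReal.ofReal_sum_of_nonneg hterm0]
      apply Finset.sum_congr rfl
      intro S hS
      rw [ENNReal.ofReal_mul (Finset.prod_nonneg fun y _ => hc y),
        ofReal_prod_of_nonneg (fun y _ => hc y)]



end SandVol

section Inst

theorem dist1_one_spec {d : ℕ} {z y : Site d} (h : dist1 z y = 1) :
    ∃ i, (z i - y i).natAbs = 1 ∧ ∀ j, j ≠ i → z j = y j := by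
  have h0 : ∑ i, (z i - y i).natAbs = 1 := h
  obtain ⟨i, -, hi⟩ := Finset.exists_ne_zero_of_sum_ne_zero (s := Finset.univ)
    (f := fun i => (z i - y i).natAbs) (by rw [h0]; exact one_ne_zero)
  have hle : (z i - y i).natAbs ≤ 1 := by
    rw [← h0]
    exact Finset.single_le_sum (f := fun k => (z k - y k).natAbs)
      (fun j _ => Nat.zero_le _) (Finset.mem_univ i)
  have h1 : (z i - y i).natAbs = 1 := le_antisymm hle (Nat.one_le_iff_ne_zero.2 hi)
  refine ⟨i, h1, fun j hj => ?_⟩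
  have hadd : (z i - y i).natAbs + ∑ k ∈ Finset.univ.erase i, (z k - y k).natAbs
      = ∑ k, (z k - y k).natAbs :=
    Finset.add_sum_erase Finset.univ (fun k => (z k - y k).natAbs) (Finset.mem_univ i)
  have hrest : ∑ k ∈ Finset.univ.erase i, (z k - y k).natAbs = 0 := by omega
  have hj0 : (z j - y j).natAbs = 0 :=
    (Finset.sum_eq_zero_iff.1 hrest) j (Finset.mem_erase.2 ⟨hj, Finset.mem_univ j⟩)
  exact sub_eq_zero.1 (Int.natAbs_eq_zero.1 hj0)

theorem dist1_comm {d : ℕ} (x y : Site d) : dist1 x y = dist1 y x := by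
  unfold dist1
  apply Finset.sum_congr rfl
  intro i _
  rw [← Int.natAbs_neg, neg_sub]

theorem dist1_self {d : ℕ} (x : Site d) : dist1 x x = 0 := by
  unfold dist1
  simp

theorem card_neighbors_le (d : ℕ) (hd : 0 < d) (Λ : Finset (Site d)) (y : SiteIn d Λ) :
    (Finset.univ.filter fun z : SiteIn d Λ =>
      dist1 (z : Site d) (y : Site d) = 1).card ≤ 2 * d := by
  classical
  have hcard : (Finset.univ : Finset (Fin d × Bool)).card = 2 * d := by
    simp [Finset.card_univ, mul_comm]
  rw [← hcard]
  set F : SiteIn d Λ → Fin d × Bool := fun z =>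
    if h : dist1 (z : Site d) (y : Site d) = 1 then
      (Classical.choose (dist1_one_spec h),
        decide ((z : Site d) (Classical.choose (dist1_one_spec h))
          - (y : Site d) (Classical.choose (dist1_one_spec h)) = 1))
    else (⟨0, hd⟩, true) with hF
  apply Finset.card_le_card_of_injOn F (fun _ _ => Finset.mem_univ _)
  intro z hz w hw hzw
  simp only [Finset.coe_filter, Set.mem_setOf_eq, Finset.mem_univ, true_and] at hz hw
  rw [hF] at hzw
  simp only [dif_pos hz, dif_pos hw] at hzw
  obtain ⟨hzi, hzrest⟩ := Classical.choose_spec (dist1_one_spec hz)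
  obtain ⟨hwi, hwrest⟩ := Classical.choose_spec (dist1_one_spec hw)
  set i := Classical.choose (dist1_one_spec hz) with hi
  set i' := Classical.choose (dist1_one_spec hw) with hi'
  have hii : i = i' := (Prod.mk.injEq _ _ _ _ ▸ hzw).1
  have hb : ((z : Site d) i - (y : Site d) i = 1) ↔ ((w : Site d) i' - (y : Site d) i' = 1) :=
    decide_eq_decide.mp (Prod.mk.injEq _ _ _ _ ▸ hzw).2
  apply Subtype.ext
  funext j
  by_cases hj : j = i
  · subst hj
    rcases Int.natAbs_eq_iff.1 hzi with hz1 | hz1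
    · have hw1 : (w : Site d) i' - (y : Site d) i' = 1 := hb.1 (by omega)
      rw [← hii] at hw1
      omega
    · have hw1 : ¬ ((w : Site d) i' - (y : Site d) i' = 1) := by
        intro hww
        have := hb.2 hww
        omega
      rcases Int.natAbs_eq_iff.1 hwi with hw2 | hw2
      · rw [← hii] at hw1 hw2; omega
      · rw [← hii] at hw2; omega
  · rw [hzrest j hj, hwrest j (hii ▸ hj)]

end Inst

def Nrel (d : ℕ) (Λ : Finset (Site d)) : SiteIn d Λ → SiteIn d Λ → Prop :=
  fun x y => dist1 (x : Site d) (y : Site d) = 1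

instance (d : ℕ) (Λ : Finset (Site d)) : DecidableRel (Nrel d Λ) :=
  fun x y => by unfold Nrel; infer_instance

/-- The Lebesgue volume of the set of allowed stable configurations in `Λ`
equals `det Δ^{(γ)}_Λ`. -/
theorem volume_allowedSet (d : ℕ) (hd : 0 < d) (γ : ℝ) (hγ : 0 ≤ γ)
    (Λ : Finset (Site d)) :
    volume (allowedSet d γ Λ) = ENNReal.ofReal (toppleMatIn d γ Λ).det := by
  classical
  have hsym : Symmetric (Nrel d Λ) := by
    intro x y h
    unfold Nrel at *
    rw [dist1_comm]
    exact h
  have hirr : ∀ x, ¬ Nrel d Λ x x := by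
    intro x h
    unfold Nrel at h
    rw [dist1_self] at h
    exact absurd h (by norm_num)
  set c : SiteIn d Λ → ℝ :=
    fun y => 2 * (d : ℝ) + γ - (SandVol.degIn (Nrel d Λ) Finset.univ y : ℝ) with hcdef
  have hdeg : ∀ (W : Finset (SiteIn d Λ)) (y : SiteIn d Λ),
      SandVol.degIn (Nrel d Λ) W y
        = (W.filter fun z : SiteIn d Λ => dist1 (z : Site d) (y : Site d) = 1).card := by
    intro W y
    unfold SandVol.degIn
    exact congrArg Finset.card (Finset.filter_congr_decidable W _ _)
  have hdegle : ∀ y, (SandVol.degIn (Nrel d Λ) Finset.univ y : ℝ) ≤ 2 * (d : ℝ) := by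
    intro y
    rw [hdeg]
    exact_mod_cast card_neighbors_le d hd Λ y
  have hc : ∀ y, 0 ≤ c y := fun y => by
    simp only [hcdef]
    linarith [hdegle y]
  have hcap : ∀ y, (SandVol.degIn (Nrel d Λ) Finset.univ y : ℝ) + c y = 2 * (d : ℝ) + γ := by
    intro y
    simp only [hcdef]
    ring
  have hAeq : allowedSet d γ Λ = SandVol.ASet (Nrel d Λ) Finset.univ c := by
    ext η
    simp only [allowedSet, SandVol.ASet, Set.mem_setOf_eq, isAllowed]
    constructor
    · rintro ⟨h1, h2⟩
      refine ⟨fun y _ => by rw [hcap y]; exact h1 y, fun W _ hWne => ?_⟩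
      obtain ⟨y, hyW, hy⟩ := h2 W hWne
      refine ⟨y, hyW, ?_⟩
      rw [hdeg W y]
      exact hy
    · rintro ⟨h1, h2⟩
      refine ⟨fun y => by rw [← hcap y]; exact h1 y (Finset.mem_univ y), fun W hWne => ?_⟩
      obtain ⟨y, hyW, hy⟩ := h2 W (Finset.subset_univ W) hWne
      refine ⟨y, hyW, ?_⟩
      rw [← hdeg W y]
      exact hy
  have hMat : SandVol.Mat (Nrel d Λ) Finset.univ
      (fun z => (SandVol.degIn (Nrel d Λ) Finset.univ z : ℝ) + c z) = toppleMatIn d γ Λ := by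
    ext x y
    unfold SandVol.Mat toppleMatIn
    have hxy : x ∈ (Finset.univ : Finset (SiteIn d Λ)) ∧ y ∈ (Finset.univ : Finset (SiteIn d Λ)) :=
      ⟨Finset.mem_univ x, Finset.mem_univ y⟩
    rw [if_pos hxy]
    by_cases h : x = y
    · rw [if_pos h, if_pos (show (x : Site d) = (y : Site d) by rw [h])]
      show (SandVol.degIn (Nrel d Λ) Finset.univ x : ℝ) + c x = 2 * (d : ℝ) + γ
      exact hcap x
    · rw [if_neg h, if_neg (fun hcc : (x : Site d) = (y : Site d) => h (Subtype.ext hcc))]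
      unfold Nrel
      by_cases h2 : dist1 (x : Site d) (y : Site d) = 1
      · rw [if_pos h2]; exact if_pos h2
      · rw [if_neg h2]; exact if_neg h2
  have hmain := SandVol.lmarginal_ASet (Nrel d Λ) hsym hirr Finset.univ c hc
  have hvol : volume (allowedSet d γ Λ)
      = (∫⋯∫⁻_Finset.univ, (SandVol.ASet (Nrel d Λ) Finset.univ c).indicator 1
          ∂fun _ => (volume : Measure ℝ)) (fun _ => 0) := by
    rw [hAeq,
      ← MeasureTheory.lintegral_indicator_one
        (SandVol.measurableSet_ASet (Nrel d Λ) Finset.univ c),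
      show (volume : Measure (ConfigIn d Λ)) = Measure.pi fun _ => volume from volume_pi,
      MeasureTheory.lintegral_eq_lmarginal_univ (fun _ => (0 : ℝ))]
  rw [hvol, hmain.2 (fun _ => 0), hMat]
end
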